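/- arXiv:1603.06441 — 7 statements merged into one kernel-verified Lean document; each statement's English description precedes it below -/
import Mathlib

section
/- Let a polynomial f(x) = c_0 + c_1 x + ... + c_r x^r be a nonzero univariate real polynomial. Then the number of positive real roots of f, counted with multiplicity, is at most the number of sign changes in the sequence of coefficients c_0, ..., c_r (where zeros are discarded before counting sign changes). -/
/-!
Dividing out `X - a` for a positive root `a` removes at least one sign change of the
coefficients: this is Mathlib's `Polynomial.roots_countP_pos_le_signVariations`. Its
`Polynomial.signVariations` lists the coefficients from the leading one down and counts sign
changes as one less than the length of the `≠`-destuttered sequence of nonzero signs, which is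
the number of adjacent pairs with different signs, read in either direction.
-/

/-- Number of sign changes in a list of reals: discard zeros, then count
adjacent pairs with opposite signs. -/
noncomputable def signChanges (l : List ℝ) : ℕ :=
  let l' := l.filter (fun x => x ≠ 0)
  ((l'.zip l'.tail).filter (fun p => p.1 * p.2 < 0)).length

open Polynomial

namespace List

variable {α : Type*} [DecidableEq α]

theorem length_destutter'_ne (a : α) (l : List α) :
    (l.destutter' (· ≠ ·) a).length = ((a :: l).zip l).countP (fun p => p.1 ≠ p.2) + 1 := by
  induction l generalizing a with
  | nil => simp
  | cons b l ih =>
    by_cases hab : a = b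
    · subst hab; simp [destutter', ih]
    · simp [destutter', hab, ih]

theorem countP_zip_tail_ne (l : List α) :
    (l.zip l.tail).countP (fun p => p.1 ≠ p.2) = (l.destutter (· ≠ ·)).length - 1 := by
  cases l with
  | nil => simp
  | cons a l => simp [destutter_cons', length_destutter'_ne]

/-- `l.destutter (· ≠ ·)` is a longest `≠`-chain sublist of `l`, and reversal maps the
`≠`-chain sublists of `l` onto those of `l.reverse`. -/
theorem length_destutter_ne_reverse (l : List α) :
    (l.reverse.destutter (· ≠ ·)).length = (l.destutter (· ≠ ·)).length := by
  suffices h : ∀ l : List α,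
      (l.destutter (· ≠ ·)).length ≤ (l.reverse.destutter (· ≠ ·)).length from
    le_antisymm (by simpa using h l.reverse) (h l)
  intro l
  simpa using IsChain.length_le_length_destutter_ne (destutter_sublist _ l).reverse
    (isChain_reverse.2 ((isChain_destutter _ l).imp fun _ _ h => Ne.symm h))

end List

theorem mul_neg_iff_sign_ne {R : Type*} [Ring R] [LinearOrder R] [IsStrictOrderedRing R]
    {x y : R} (hx : x ≠ 0) (hy : y ≠ 0) : x * y < 0 ↔ SignType.sign x ≠ SignType.sign y := by
  rcases hx.lt_or_gt with hx | hx <;> rcases hy.lt_or_gt with hy | hy <;>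
    simp [sign_neg, sign_pos, hx, hy, mul_pos_of_neg_of_neg, mul_neg_of_pos_of_neg,
      mul_neg_of_neg_of_pos, le_of_lt]

theorem signChanges_eq_length_destutter_sub_one (l : List ℝ) :
    signChanges l =
      (((l.map SignType.sign).filter (· ≠ 0)).destutter (· ≠ ·)).length - 1 := by
  set l' := l.filter (· ≠ 0) with hl'
  have hl'_ne : ∀ x ∈ l', x ≠ 0 := fun x hx => by simpa using (List.mem_filter.1 hx).2
  have hsign : (l.map SignType.sign).filter (· ≠ 0) = l'.map SignType.sign := by
    rw [List.filter_map, hl']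
    exact congrArg _ (List.filter_congr fun x _ => by simp)
  rw [hsign, ← List.countP_zip_tail_ne, ← List.map_tail, List.zip_map, List.countP_map,
    signChanges, ← List.countP_eq_length_filter]
  refine List.countP_congr fun p hp => ?_
  have hp' := List.of_mem_zip hp
  simpa using mul_neg_iff_sign_ne (hl'_ne _ hp'.1) (hl'_ne _ (List.mem_of_mem_tail hp'.2))

theorem Polynomial.coeffList_eq_reverse_map_coeff {R : Type*} [Semiring R] {f : R[X]}
    (hf : f ≠ 0) : f.coeffList = ((List.range (f.natDegree + 1)).map f.coeff).reverse := by
  rw [coeffList, withBotSucc_degree_eq_natDegree_add_one hf, List.map_reverse]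

theorem signChanges_map_coeff_eq_signVariations (f : ℝ[X]) :
    signChanges ((List.range (f.natDegree + 1)).map f.coeff) = f.signVariations := by
  rcases eq_or_ne f 0 with rfl | hf
  · simp [signChanges]
  rw [signChanges_eq_length_destutter_sub_one, signVariations, coeffList_eq_reverse_map_coeff hf,
    List.map_reverse, List.filter_reverse, List.length_destutter_ne_reverse]

theorem descartes_rule_of_signs_bound_general (f : Polynomial ℝ) :
    Multiset.card (f.roots.filter (fun x => 0 < x)) ≤
      signChanges ((List.range (f.natDegree + 1)).map f.coeff) := by
  rw [signChanges_map_coeff_eq_signVariations, ← Multiset.countP_eq_card_filter]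
  exact roots_countP_pos_le_signVariations f

/-- Descartes' rule of signs (bound only): the number of positive real roots of
a nonzero real polynomial, counted with multiplicity, is at most the number of
sign changes in its coefficient sequence. -/
theorem descartes_rule_of_signs_bound (f : Polynomial ℝ) (hf : f ≠ 0) :
    Multiset.card (f.roots.filter (fun x => 0 < x)) ≤
      signChanges ((List.range (f.natDegree + 1)).map f.coeff) :=
  descartes_rule_of_signs_bound_general f
end

section
/- For integers 0 < l_1 < l_2 < ... < l_q, there exist positive reals k_1, ..., k_q such that the polynomial P(x) = 1 - k_1 x^{l_1} + k_2 x^{l_2} - ... + (-1)^q k_q x^{l_q} has q distinct positive real roots 0 < x_1 < x_2 < ... < x_q, and moreover P'(x_i) < 0 for i odd and P'(x_i) > 0 for i even. -/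
/-!
Induction on the number of exponents. Suppose `p` has simple positive roots `x₀ < ⋯ < x_{q-1}`
at which the signs of `p'` alternate, starting negative, and `(-1)^q p > 0` beyond them; let
`L > deg p`. Adding `(-1)^(q+1) ε X^L` with `ε > 0` small keeps these roots simple, with the same
signs of the derivative, and creates one more: `t > 0` is a root exactly when
`ε = f t := (-1)^q p(t) / t^L`. As `f > 0` far out and `f → 0`, `f` is decreasing at points `c`
arbitrarily far out with `f c` arbitrarily small; taking `ε = f c` makes `c` a root at which the
derivative has the sign `(-1)^(q+1)`.
-/

open Polynomial Filter Topology Set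

theorem frequently_neg_of_hasDerivAt_of_tendsto_zero {f f' : ℝ → ℝ}
    (hf : ∀ᶠ t in atTop, HasDerivAt f (f' t) t) (hpos : ∀ᶠ t in atTop, 0 < f t)
    (hlim : Tendsto f atTop (𝓝 0)) : ∃ᶠ t in atTop, f' t < 0 := by
  intro hnonneg
  simp only [not_lt] at hnonneg
  obtain ⟨N, hN⟩ := eventually_atTop.1 (hf.and (hpos.and hnonneg))
  have hmono : MonotoneOn f (Ici N) :=
    monotoneOn_of_hasDerivWithinAt_nonneg (convex_Ici N)
      (fun t ht => (hN t ht).1.continuousAt.continuousWithinAt)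
      (fun t ht => (hN t (interior_subset ht)).1.hasDerivWithinAt)
      (fun t ht => (hN t (interior_subset ht)).2.2)
  obtain ⟨t, hlt, hNt⟩ :=
    ((hlim.eventually (eventually_lt_nhds (hN N le_rfl).2.1)).and (eventually_ge_atTop N)).exists
  exact (hmono (mem_Ici.2 le_rfl) hNt hNt).not_gt hlt

theorem Fin.strictMono_snoc {α : Type*} [Preorder α] {n : ℕ} {y : Fin n → α} (hy : StrictMono y)
    {c : α} (hc : ∀ i, y i < c) : StrictMono (Fin.snoc y c : Fin (n + 1) → α) := by
  intro i j hij
  induction j using Fin.lastCases with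
  | last =>
    obtain ⟨i, rfl⟩ := Fin.exists_castSucc_eq.2 hij.ne
    simpa using hc i
  | cast j =>
    obtain ⟨i, rfl⟩ := Fin.exists_castSucc_eq.2 (hij.trans (Fin.castSucc_lt_last j)).ne
    simpa using hy (Fin.castSucc_lt_castSucc_iff.1 hij)

theorem eventually_exists_root_add_C_mul_near {p r : ℝ[X]} {x s δ : ℝ} (hx : p.IsRoot x)
    (hs : 0 < s * p.derivative.eval x) (hδ : 0 < δ) :
    ∀ᶠ ε in 𝓝 0, ∃ t, |t - x| < δ ∧ (p + C ε * r).IsRoot t ∧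
      0 < s * (p + C ε * r).derivative.eval t := by
  -- On a box around `(0, x)` the derivative has the sign of `s`; there `s * p` crosses `0`, and
  -- the sign change at the two ends of the crossing survives small `ε`.
  have hderiv : ∀ᶠ z in 𝓝 (0 : ℝ) ×ˢ 𝓝 x,
      0 < s * (p.derivative.eval z.2 + z.1 * r.derivative.eval z.2) := by
    rw [← nhds_prod_eq]
    exact ((by fun_prop : Continuous fun z : ℝ × ℝ =>
      s * (p.derivative.eval z.2 + z.1 * r.derivative.eval z.2)).tendsto _).eventually_const_lt
      (by simpa using hs)
  obtain ⟨pa, hpa, pb, hpb, hab⟩ := eventually_prod_iff.1 hderiv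
  obtain ⟨η, hη, hηb⟩ := Metric.eventually_nhds_iff.1 hpb
  set ρ := min δ η
  have hρ : 0 < ρ := lt_min hδ hη
  have hball : ∀ t ∈ Icc (x - ρ / 2) (x + ρ / 2), |t - x| < ρ := fun t ht => by
    rw [abs_lt]; constructor <;> linarith [ht.1, ht.2]
  have hmono : StrictMonoOn (fun t => s * p.eval t) (Icc (x - ρ / 2) (x + ρ / 2)) :=
    strictMonoOn_of_hasDerivWithinAt_pos (convex_Icc _ _) (by fun_prop)
      (fun t _ => ((p.hasDerivAt t).const_mul s).hasDerivWithinAt)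
      (fun t ht => by
        simpa using hab hpa.self_of_nhds
          (hηb ((hball t (interior_subset ht)).trans_le (min_le_right _ _))))
  have hsx : s * p.eval x = 0 := by rw [hx.eq_zero, mul_zero]
  have ha : s * p.eval (x - ρ / 2) < 0 :=
    hsx ▸ hmono ⟨le_rfl, by linarith⟩ ⟨by linarith, by linarith⟩ (by linarith)
  have hb : 0 < s * p.eval (x + ρ / 2) :=
    hsx ▸ hmono ⟨by linarith, by linarith⟩ ⟨by linarith, le_rfl⟩ (by linarith)
  have hcont (t : ℝ) : Tendsto (fun ε => s * (p + C ε * r).eval t) (𝓝 0) (𝓝 (s * p.eval t)) := by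
    simpa using ((by fun_prop : Continuous fun ε => s * (p.eval t + ε * r.eval t)).tendsto 0)
  filter_upwards [hpa, (hcont _).eventually_lt_const ha, (hcont _).eventually_const_lt hb]
    with ε hε ha hb
  obtain ⟨t, ht, hroot⟩ := intermediate_value_Ioo (f := fun t => s * (p + C ε * r).eval t)
    (by linarith) (by fun_prop) ⟨ha, hb⟩
  have htx := hball t (Ioo_subset_Icc_self ht)
  refine ⟨t, htx.trans_le (min_le_left _ _), ?_, ?_⟩
  · exact (mul_eq_zero.1 hroot).resolve_left (by rintro rfl; simp at hs)
  · simpa using hab hε (hηb (htx.trans_le (min_le_right _ _)))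

theorem exists_root_add_monomial_of_degree_lt {p : ℝ[X]} {L q : ℕ} (hL : p.degree < L)
    (hp : ∀ᶠ t in atTop, 0 < (-1) ^ q * p.eval t) {E G : ℝ → Prop} (hE : ∀ᶠ ε in 𝓝 0, E ε)
    (hG : ∀ᶠ c in atTop, G c) :
    ∃ ε > 0, E ε ∧ ∃ c, G c ∧
      (p + C ((-1) ^ (q + 1) * ε) * X ^ L).IsRoot c ∧
      0 < (-1) ^ (q + 1) * (p + C ((-1) ^ (q + 1) * ε) * X ^ L).derivative.eval c ∧
      ∀ᶠ t in atTop, 0 < (-1) ^ (q + 1) * (p + C ((-1) ^ (q + 1) * ε) * X ^ L).eval t := by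
  have hs : (-1 : ℝ) ^ q * (-1) ^ q = 1 := by rw [← mul_pow]; norm_num
  simp only [pow_succ, mul_neg_one]
  generalize (-1 : ℝ) ^ q = s at hs hp ⊢
  -- `t ≠ 0` is a root of `p + C (-s * ε) * X ^ L` exactly when `ε = f t`
  set f : ℝ → ℝ := fun t => s * p.eval t / t ^ L
  set f' : ℝ → ℝ := fun t =>
    (s * p.derivative.eval t * t ^ L - s * p.eval t * (L * t ^ (L - 1))) / (t ^ L) ^ 2
  have hf (t : ℝ) (ht : t ≠ 0) : HasDerivAt f (f' t) t :=
    ((p.hasDerivAt t).const_mul s).div (hasDerivAt_pow L t) (pow_ne_zero _ ht)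
  have hlim : Tendsto f atTop (𝓝 0) := by
    simpa [f, mul_div_assoc] using
      (p.div_tendsto_atTop_zero_of_degree_lt (X ^ L) (by simpa using hL)).const_mul s
  have hfpos : ∀ᶠ t in atTop, 0 < f t :=
    (hp.and (eventually_gt_atTop 0)).mono fun t ht => div_pos ht.1 (pow_pos ht.2 L)
  obtain ⟨c, hf'c, hEc, hfc, hGc, hc⟩ :=
    ((frequently_neg_of_hasDerivAt_of_tendsto_zero
      ((eventually_ne_atTop 0).mono hf) hfpos hlim).and_eventually
      ((hlim.eventually hE).and (hfpos.and (hG.and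
        (eventually_gt_atTop 0))))).exists
  refine ⟨f c, hfc, hEc, c, hGc, ?_, ?_, ?_⟩
  · simp only [IsRoot, eval_add, eval_mul, eval_C, eval_pow, eval_X, f]
    field_simp
    linear_combination -(p.eval c) * hs
  · have : f' c * c ^ L < 0 := mul_neg_of_neg_of_pos hf'c (pow_pos hc L)
    simp only [derivative_add, derivative_C_mul_X_pow, eval_add, eval_mul, eval_C, eval_pow,
      eval_X, f, f'] at this ⊢
    field_simp at this ⊢
    linear_combination this - (s * p.eval c * L * c ^ (L - 1)) * hs
  · filter_upwards [hlim.eventually (eventually_lt_nhds hfc), eventually_gt_atTop 0]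
      with t hft ht
    have : 0 < (f c - f t) * t ^ L := mul_pos (by linarith) (pow_pos ht L)
    simp only [eval_add, eval_mul, eval_C, eval_pow, eval_X, f] at this ⊢
    field_simp at this ⊢
    linear_combination this - (s * p.eval c * t ^ L) * hs

structure AlternatingRoots (p : ℝ[X]) {q : ℕ} (x : Fin q → ℝ) : Prop where
  strictMono : StrictMono x
  pos : ∀ i, 0 < x i
  isRoot : ∀ i, p.IsRoot (x i)
  sign_derivative : ∀ i, 0 < (-1) ^ (i.val + 1) * p.derivative.eval (x i)
  eventually_sign : ∀ᶠ t in atTop, 0 < (-1) ^ q * p.eval t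

theorem AlternatingRoots.eventually_perturb {p : ℝ[X]} {q : ℕ} {x : Fin q → ℝ}
    (h : AlternatingRoots p x) (r : ℝ[X]) :
    ∀ᶠ ε in 𝓝 0, ∃ y : Fin q → ℝ, StrictMono y ∧ (∀ i, 0 < y i) ∧ (∀ i, y i < x i + 1) ∧
      (∀ i, (p + C ε * r).IsRoot (y i)) ∧
      ∀ i, 0 < (-1) ^ (i.val + 1) * (p + C ε * r).derivative.eval (y i) := by
  obtain ⟨δ, ⟨hδ1, hδx, hδgap⟩, hδ⟩ : ∃ δ, (δ < 1 ∧ (∀ i, δ < x i) ∧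
      ∀ i j, i < j → δ < (x j - x i) / 2) ∧ 0 < δ := by
    have hgap (i j : Fin q) : ∀ᶠ δ in 𝓝 (0 : ℝ), i < j → δ < (x j - x i) / 2 := by
      rcases lt_or_ge i j with hij | hji
      · exact (eventually_lt_nhds (half_pos (sub_pos.2 (h.strictMono hij)))).mono fun _ h _ => h
      · exact .of_forall fun _ hij => absurd hij hji.not_gt
    exact ((((eventually_lt_nhds one_pos).and ((eventually_all.2 fun i => eventually_lt_nhds
      (h.pos i)).and (eventually_all.2 fun i => eventually_all.2 (hgap i)))).filter_mono
      nhdsWithin_le_nhds).and (self_mem_nhdsWithin (s := Ioi 0))).exists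
  filter_upwards [eventually_all.2 fun i =>
    eventually_exists_root_add_C_mul_near (r := r) (h.isRoot i) (h.sign_derivative i) hδ] with ε hε
  choose y hyx hroot hsign using hε
  have hyx' (i : Fin q) := abs_sub_lt_iff.1 (hyx i)
  refine ⟨y, fun i j hij => ?_, fun i => ?_, fun i => ?_, hroot, hsign⟩
  · linarith [hyx' i, hyx' j, hδgap i j hij]
  · linarith [hyx' i, hδx i]
  · linarith [hyx' i]

theorem AlternatingRoots.exists_add_monomial {p : ℝ[X]} {q : ℕ} {x : Fin q → ℝ}
    (h : AlternatingRoots p x) {L : ℕ} (hL : p.degree < L) :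
    ∃ ε > 0, ∃ y : Fin (q + 1) → ℝ, AlternatingRoots (p + C ((-1) ^ (q + 1) * ε) * X ^ L) y := by
  have hP (ε : ℝ) :
      p + C ε * (C ((-1) ^ (q + 1)) * X ^ L) = p + C ((-1) ^ (q + 1) * ε) * X ^ L := by
    rw [C_mul, mul_comm (C _) (C ε), mul_assoc]
  obtain ⟨ε, hε, ⟨y, hy, hy0, hyx, hyroot, hysign⟩, c, ⟨hc0, hxc⟩, hcroot, hcsign, htail⟩ :=
    exists_root_add_monomial_of_degree_lt hL h.eventually_sign
      (h.eventually_perturb (C ((-1) ^ (q + 1)) * X ^ L))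
      ((eventually_gt_atTop 0).and (eventually_all.2 fun i => eventually_gt_atTop (x i + 1)))
  rw [hP] at hyroot hysign
  refine ⟨ε, hε, Fin.snoc y c, Fin.strictMono_snoc hy fun i => (hyx i).trans (hxc i),
    fun i => Fin.lastCases (by simpa using hc0) (fun i => by simpa using hy0 i) i,
    fun i => Fin.lastCases (by simpa using hcroot) (fun i => by simpa using hyroot i) i,
    fun i => Fin.lastCases (by simpa using hcsign) (fun i => by simpa using hysign i) i, htail⟩

noncomputable def alternatingPoly {q : ℕ} (l : Fin q → ℕ) (k : Fin q → ℝ) : ℝ[X] :=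
  1 + ∑ i, C ((-1) ^ (i.val + 1) * k i) * X ^ l i

theorem eval_alternatingPoly {q : ℕ} (l : Fin q → ℕ) (k : Fin q → ℝ) (t : ℝ) :
    (alternatingPoly l k).eval t = 1 + ∑ i, (-1) ^ (i.val + 1) * k i * t ^ l i := by
  simp [alternatingPoly, eval_finsetSum]

theorem degree_alternatingPoly_lt {q : ℕ} {l : Fin q → ℕ} (k : Fin q → ℝ) {L : ℕ} (hL : 0 < L)
    (hl : ∀ i, l i < L) : (alternatingPoly l k).degree < L := by
  refine (degree_add_le _ _).trans_lt (max_lt (degree_one_le.trans_lt (by exact_mod_cast hL)) ?_)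
  refine (degree_sum_le _ _).trans_lt ((Finset.sup_lt_iff (WithBot.bot_lt_coe L)).2 fun i _ => ?_)
  exact (degree_C_mul_X_pow_le _ _).trans_lt (WithBot.coe_lt_coe.2 (hl i))

theorem alternatingPoly_snoc {q : ℕ} (l : Fin (q + 1) → ℕ) (k : Fin q → ℝ) (ε : ℝ) :
    alternatingPoly l (Fin.snoc k ε) =
      alternatingPoly (fun i => l i.castSucc) k + C ((-1) ^ (q + 1) * ε) * X ^ l (Fin.last q) := by
  simp only [alternatingPoly, Fin.sum_univ_castSucc, Fin.snoc_castSucc, Fin.snoc_last,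
    Fin.val_castSucc, Fin.val_last]
  ring

theorem exists_alternatingRoots_alternatingPoly : ∀ {q : ℕ} (l : Fin q → ℕ), StrictMono l →
    (∀ i, 0 < l i) → ∃ k, (∀ i, 0 < k i) ∧ ∃ x : Fin q → ℝ, AlternatingRoots (alternatingPoly l k) x
  | 0, l, _, _ => ⟨Fin.elim0, fun i => i.elim0, Fin.elim0, fun i => i.elim0, fun i => i.elim0,
      fun i => i.elim0, fun i => i.elim0, by simp [alternatingPoly]⟩
  | q + 1, l, hl, hl0 => by
    obtain ⟨k, hk, x, hx⟩ := exists_alternatingRoots_alternatingPoly (fun i => l i.castSucc)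
      (hl.comp Fin.strictMono_castSucc) (fun i => hl0 _)
    obtain ⟨ε, hε, y, hy⟩ := hx.exists_add_monomial (degree_alternatingPoly_lt k (hl0 (Fin.last q))
      fun i => hl (Fin.castSucc_lt_last i))
    refine ⟨Fin.snoc k ε, fun i => ?_, y, alternatingPoly_snoc l k ε ▸ hy⟩
    induction i using Fin.lastCases <;> simp [hε, hk]

open Finset in
/-- Grabiner's lemma: the Descartes bound is achieved.  For exponents
`0 < l 0 < l 1 < ⋯ < l (q-1)`, there are positive coefficients `k i` such that
`P(x) = 1 - k₀ x^{l₀} + k₁ x^{l₁} - ⋯ + (-1)^q k_{q-1} x^{l_{q-1}}`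
has `q` distinct positive roots `0 < x₀ < x₁ < ⋯ < x_{q-1}`, with
`P' < 0` at roots of even (0-based) index and `P' > 0` at roots of odd index. -/
theorem grabiner_descartes_bound_achieved (q : ℕ) (l : Fin q → ℕ)
    (hl : StrictMono l) (hl0 : ∀ i, 0 < l i) :
    ∃ k : Fin q → ℝ, (∀ i, 0 < k i) ∧
      ∃ x : Fin q → ℝ, StrictMono x ∧ (∀ i, 0 < x i) ∧
        (let P : ℝ → ℝ := fun t => 1 + ∑ i : Fin q, (-1) ^ (i.val + 1) * k i * t ^ (l i)
        (∀ i, P (x i) = 0) ∧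
        (∀ i : Fin q, i.val % 2 = 0 → deriv P (x i) < 0) ∧
        (∀ i : Fin q, i.val % 2 = 1 → 0 < deriv P (x i))) := by
  obtain ⟨k, hk, x, hx⟩ := exists_alternatingRoots_alternatingPoly l hl hl0
  have hP : (fun t => 1 + ∑ i : Fin q, (-1) ^ (i.val + 1) * k i * t ^ (l i)) =
      fun t => (alternatingPoly l k).eval t := funext fun t => (eval_alternatingPoly l k t).symm
  refine ⟨k, hk, x, hx.strictMono, hx.pos, ?_⟩
  simp only [hP, Polynomial.deriv]
  refine ⟨fun i => by rw [← eval_alternatingPoly]; exact hx.isRoot i, fun i hi => ?_, fun i hi => ?_⟩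
  · have := hx.sign_derivative i
    rw [Odd.neg_one_pow (Nat.odd_iff.2 (by omega))] at this
    linarith
  · have := hx.sign_derivative i
    rw [Even.neg_one_pow (Nat.even_iff.2 (by omega))] at this
    linarith
end

section
/- Let s ≥ 3 and let α, γ ∈ ℝ^s with α_i ≠ 0 and γ_i ≠ 0 for all i. Let C_γ denote the open orthant of vectors v with sign(v_i) = sign(γ_i) for all i. If the hyperplane α^⊥ intersects C_γ, then there exists v ∈ α^⊥ ∩ C_γ such that the componentwise square v*v = (v_1^2, ..., v_s^2) is not in α^⊥, i.e., Σ α_i v_i^2 ≠ 0. -/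
open Finset

lemma sign_add_of_abs_lt' {x ε : ℝ} (h : |ε| < |x|) :
    Real.sign (x + ε) = Real.sign x := by
  rcases lt_trichotomy x 0 with hx | hx | hx
  · rw [abs_of_neg hx] at h
    obtain ⟨h1, h2⟩ := abs_lt.mp h
    rw [Real.sign_of_neg hx, Real.sign_of_neg (by linarith)]
  · subst hx
    simp only [abs_zero] at h
    exact absurd h (abs_nonneg ε).not_gt
  · rw [abs_of_pos hx] at h
    obtain ⟨h1, h2⟩ := abs_lt.mp h
    rw [Real.sign_of_pos hx, Real.sign_of_pos (by linarith)]

open Finset in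
/-- The "square lemma": if `α, γ ∈ ℝ^s` (`s ≥ 3`) have all coordinates nonzero
and the hyperplane `α^⊥` meets the open orthant of `γ`, then some vector `v` in
that intersection has componentwise square not orthogonal to `α`. -/
theorem square_lemma (s : ℕ) (hs : 3 ≤ s) (α γ : Fin s → ℝ)
    (hα : ∀ i, α i ≠ 0) (hγ : ∀ i, γ i ≠ 0)
    (hmeet : ∃ w : Fin s → ℝ, (∑ i, α i * w i = 0) ∧
      ∀ i, Real.sign (w i) = Real.sign (γ i)) :
    ∃ v : Fin s → ℝ, (∑ i, α i * v i = 0) ∧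
      (∀ i, Real.sign (v i) = Real.sign (γ i)) ∧
      (∑ i, α i * (v i) ^ 2 ≠ 0) := by
  obtain ⟨w, hw0, hwsgn⟩ := hmeet
  by_cases hw2 : ∑ i, α i * (w i) ^ 2 ≠ 0
  · exact ⟨w, hw0, hwsgn, hw2⟩
  push_neg at hw2
  have hwne : ∀ k, w k ≠ 0 := by
    intro k hk
    have := hwsgn k
    rw [hk, Real.sign_zero] at this
    exact hγ k (Real.sign_eq_zero_iff.mp this.symm)
  -- find a good pair of indices
  have key : ∃ i j : Fin s, i ≠ j ∧ (w i ≠ w j ∨ α i + α j ≠ 0) := by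
    by_contra h
    push_neg at h
    have i0 : Fin s := ⟨0, by omega⟩
    have h01 := (h ⟨0, by omega⟩ ⟨1, by omega⟩ (by simp [Fin.ext_iff])).2
    have h02 := (h ⟨0, by omega⟩ ⟨2, by omega⟩ (by simp [Fin.ext_iff])).2
    have h12 := (h ⟨1, by omega⟩ ⟨2, by omega⟩ (by simp [Fin.ext_iff])).2
    exact hα ⟨0, by omega⟩ (by linarith)
  obtain ⟨i, j, hij, hkey⟩ := key
  have hji : j ≠ i := hij.symm
  set u : Fin s → ℝ := fun k => if k = i then α j else if k = j then -(α i) else 0 with hu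
  have hui : u i = α j := by simp [hu]
  have huj : u j = -(α i) := by simp [hu, hji]
  have huo : ∀ k, k ≠ i → k ≠ j → u k = 0 := by intro k h1 h2; simp [hu, h1, h2]
  have sum_pair : ∀ g : Fin s → ℝ, (∀ k, k ≠ i → k ≠ j → g k = 0) →
      ∑ k, g k = g i + g j := by
    intro g hg
    rw [← Finset.sum_subset (Finset.subset_univ ({i, j} : Finset (Fin s)))
      (by intro k _ hk; simp only [Finset.mem_insert, Finset.mem_singleton, not_or] at hk
          exact hg k hk.1 hk.2)]
    rw [Finset.sum_insert (by simp [hij]), Finset.sum_singleton]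
  have hαu : ∑ k, α k * u k = 0 := by
    rw [sum_pair _ (fun k h1 h2 => by rw [huo k h1 h2, mul_zero]), hui, huj]; ring
  have hαwu : ∑ k, α k * (w k * u k) = α i * α j * (w i - w j) := by
    rw [sum_pair _ (fun k h1 h2 => by rw [huo k h1 h2, mul_zero, mul_zero]), hui, huj]; ring
  have hαuu : ∑ k, α k * (u k) ^ 2 = α i * α j * (α j + α i) := by
    rw [sum_pair _ (fun k h1 h2 => by rw [huo k h1 h2]; ring), hui, huj]; ring
  set B : ℝ := α i * α j * (w i - w j) with hB
  set Q : ℝ := α i * α j * (α j + α i) with hQ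
  have hBQ : B ≠ 0 ∨ Q ≠ 0 := by
    rcases hkey with h | h
    · exact Or.inl (mul_ne_zero (mul_ne_zero (hα i) (hα j)) (sub_ne_zero.mpr h))
    · exact Or.inr (mul_ne_zero (mul_ne_zero (hα i) (hα j))
        (by rw [add_comm]; exact h))
  set δ : ℝ := min (|w i| / |α j|) (|w j| / |α i|) with hδ
  have hδpos : 0 < δ := lt_min
    (div_pos (abs_pos.mpr (hwne i)) (abs_pos.mpr (hα j)))
    (div_pos (abs_pos.mpr (hwne j)) (abs_pos.mpr (hα i)))
  have ht : ∃ t : ℝ, t ≠ 0 ∧ 2 * B + t * Q ≠ 0 ∧ |t| < δ := by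
    by_cases hQ0 : Q = 0
    · have hB0 : B ≠ 0 := hBQ.resolve_right (by simp [hQ0])
      refine ⟨δ / 2, by positivity, ?_, ?_⟩
      · rw [hQ0, mul_zero, add_zero]; exact mul_ne_zero two_ne_zero hB0
      · rw [abs_of_pos (by positivity)]; linarith
    · by_cases h2 : 2 * B + (δ / 2) * Q = 0
      · refine ⟨δ / 4, by positivity, ?_, ?_⟩
        · intro h4
          have : (δ / 4) * Q = 0 := by linarith
          rcases mul_eq_zero.mp this with h | h
          · linarith
          · exact hQ0 h
        · rw [abs_of_pos (by positivity)]; linarith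
      · exact ⟨δ / 2, by positivity, h2, by rw [abs_of_pos (by positivity)]; linarith⟩
  obtain ⟨t, ht0, htBQ, htδ⟩ := ht
  refine ⟨fun k => w k + t * u k, ?_, ?_, ?_⟩
  · have : ∑ k, α k * (w k + t * u k)
        = (∑ k, α k * w k) + t * ∑ k, α k * u k := by
      rw [Finset.mul_sum, ← Finset.sum_add_distrib]
      exact Finset.sum_congr rfl (fun k _ => by ring)
    rw [this, hw0, hαu]; ring
  · intro k
    rw [← hwsgn k]
    by_cases hki : k = i
    · subst hki
      apply sign_add_of_abs_lt'
      rw [abs_mul, hui]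
      calc |t| * |α j| < δ * |α j| := by
            exact mul_lt_mul_of_pos_right htδ (abs_pos.mpr (hα j))
        _ ≤ (|w k| / |α j|) * |α j| := by
            apply mul_le_mul_of_nonneg_right (min_le_left _ _) (abs_nonneg _)
        _ = |w k| := div_mul_cancel₀ _ (abs_ne_zero.mpr (hα j))
    · by_cases hkj : k = j
      · subst hkj
        apply sign_add_of_abs_lt'
        rw [abs_mul, huj, abs_neg]
        calc |t| * |α i| < δ * |α i| := by
              exact mul_lt_mul_of_pos_right htδ (abs_pos.mpr (hα i))
          _ ≤ (|w k| / |α i|) * |α i| := by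
              apply mul_le_mul_of_nonneg_right (min_le_right _ _) (abs_nonneg _)
          _ = |w k| := div_mul_cancel₀ _ (abs_ne_zero.mpr (hα i))
      · simp only [huo k hki hkj, mul_zero, add_zero]
  · have expand : ∑ k, α k * (w k + t * u k) ^ 2
        = (∑ k, α k * (w k) ^ 2) + 2 * t * (∑ k, α k * (w k * u k))
          + t ^ 2 * (∑ k, α k * (u k) ^ 2) := by
      rw [Finset.mul_sum, Finset.mul_sum, ← Finset.sum_add_distrib, ← Finset.sum_add_distrib]
      exact Finset.sum_congr rfl (fun k _ => by ring)
    rw [expand, hw2, hαwu, hαuu, zero_add]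
    intro habs
    apply htBQ
    have : t * (2 * B + t * Q) = 0 := by ring_nf; ring_nf at habs; linarith
    exact (mul_eq_zero.mp this).resolve_left ht0
end

section
/- Every T-alternating one-species mass-action network admits, for some choice of positive rate constants, exactly T nondegenerate positive steady states (simple positive roots of the ODE polynomial); moreover ⌈T/2⌉ of them are exponentially stable (the derivative of the ODE polynomial is negative there) when the arrow diagram starts with →, and ⌊T/2⌋ are exponentially stable when it starts with ←. -/
/-!
Take `Q = ∑ (-1)^i c_i X^{m_i}` with `c_i > 0` chosen inductively so that `Q` alternates in
sign at points `w_0 < ⋯ < w_T`: a small enough new top monomial keeps the old signs, and far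
enough out the new monomial dominates and supplies the next sign. The intermediate value theorem
gives a root of `Q` in each `(w_j, w_{j+1})`. Since the coefficients of `Q` change sign `T` times,
Descartes' rule of signs allows at most `T` positive roots counted with multiplicity, so these
roots are all of them and all are simple; the sign of `Q'` at each is then forced by the sign
change of `Q` across it. Finally `κ_i = c_i / |n_i - m_i|` turns the network polynomial into
`sign (n_0 - m_0) • Q`.
-/

open Finset Filter Topology Polynomial

namespace Polynomial

theorem signVariations_le_card_support_sub_one {R : Type*} [Semiring R] [LinearOrder R]
    (P : R[X]) : P.signVariations ≤ #P.support - 1 := by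
  induction h : #P.support generalizing P with
  | zero => simp [support_eq_empty.1 (card_eq_zero.1 h)]
  | succ k ih =>
    rcases k with _ | k
    · obtain ⟨n, a, rfl⟩ := card_support_le_one_iff_monomial.1 h.le
      simp
    · have := ih P.eraseLead (card_support_eraseLead' h)
      have := P.signVariations_le_eraseLead_succ
      omega

theorem countP_pos_roots_le_card_support_sub_one {R : Type*} [CommRing R] [LinearOrder R]
    [IsStrictOrderedRing R] (P : R[X]) : P.roots.countP (0 < ·) ≤ #P.support - 1 :=
  P.roots_countP_pos_le_signVariations.trans P.signVariations_le_card_support_sub_one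

theorem support_sum_C_mul_X_pow_subset {R ι : Type*} [Semiring R] (s : Finset ι) (a : ι → R)
    (e : ι → ℕ) : (∑ i ∈ s, C (a i) * X ^ e i).support ⊆ s.image e := by
  intro n hn
  rw [mem_support_iff, finsetSum_coeff] at hn
  obtain ⟨i, hi, hne⟩ := exists_ne_zero_of_sum_ne_zero hn
  rw [coeff_C_mul_X_pow] at hne
  exact mem_image.2 ⟨i, hi, (ite_ne_right_iff.1 hne).1.symm⟩

theorem degree_sum_C_mul_X_pow_lt {R ι : Type*} [Semiring R] (s : Finset ι) (a : ι → R)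
    (e : ι → ℕ) {d : ℕ} (he : ∀ i ∈ s, e i < d) :
    (∑ i ∈ s, C (a i) * X ^ e i).degree < (d : WithBot ℕ) :=
  (degree_sum_le _ _).trans_lt <| (Finset.sup_lt_iff (WithBot.bot_lt_coe d)).2 fun i hi =>
    (degree_C_mul_X_pow_le _ _).trans_lt (WithBot.coe_lt_coe.2 (he i hi))

theorem eventually_pos_eval_add_mul_pow {f : ℝ[X]} {d : ℕ} (hf : f.degree < d) {δ : ℝ}
    (hδ : 0 < δ) : ∀ᶠ t in atTop, 0 < f.eval t + δ * t ^ d := by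
  have hlo := (isLittleO_atTop_of_degree_lt (P := f) (Q := C δ * X ^ d)
    (by rwa [degree_C_mul_X_pow d hδ.ne'])).bound one_half_pos
  filter_upwards [hlo, eventually_gt_atTop 0] with t hle ht
  have hpos : 0 < δ * t ^ d := by positivity
  simp only [eval_mul, eval_C, eval_pow, eval_X, Real.norm_eq_abs, abs_of_pos hpos] at hle
  linarith [neg_abs_le (f.eval t)]

variable {R : Type*} [CommRing R] [IsDomain R]

theorem cons_le_roots_of_isRoot_derivative {P : R[X]} (hP : P ≠ 0) {s : Finset R}
    (hs : ∀ x ∈ s, P.IsRoot x) {x : R} (hx : x ∈ s) (hx' : P.derivative.IsRoot x) :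
    x ::ₘ s.val ≤ P.roots := by
  classical
  refine Multiset.le_iff_count.2 fun y => ?_
  rw [count_roots, Multiset.count_cons]
  by_cases hy : y = x
  · subst hy
    rw [Multiset.count_eq_one_of_mem s.nodup hx, if_pos rfl]
    exact (one_lt_rootMultiplicity_iff_isRoot hP).2 ⟨hs y hx, hx'⟩
  · rw [if_neg hy, add_zero]
    by_cases hys : y ∈ s
    · rw [Multiset.count_eq_one_of_mem s.nodup hys]
      exact (rootMultiplicity_pos hP).2 (hs y hys)
    · simp [Multiset.count_eq_zero_of_notMem hys]

variable [LinearOrder R] {P : R[X]} {s : Finset R}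

theorem card_le_countP_pos_roots {t : Multiset R} (ht : t ≤ P.roots) (hpos : ∀ x ∈ t, 0 < x) :
    Multiset.card t ≤ P.roots.countP (0 < ·) :=
  (Multiset.countP_eq_card.2 hpos).ge.trans (Multiset.countP_le_of_le _ ht)

theorem mem_of_isRoot_of_countP_pos_roots_le (hP : P ≠ 0) (hs : ∀ x ∈ s, 0 < x ∧ P.IsRoot x)
    (hcount : P.roots.countP (0 < ·) ≤ #s) {y : R} (hy : 0 < y) (hroot : P.IsRoot y) :
    y ∈ s := by
  by_contra hys
  have hle : (insert y s).val ≤ P.roots :=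
    (Multiset.le_iff_subset (insert y s).nodup).2 fun x hx => (mem_roots hP).2 <| by
      rcases mem_insert.1 hx with rfl | hx
      exacts [hroot, (hs x hx).2]
  have := card_le_countP_pos_roots hle fun x hx => by
    rcases mem_insert.1 hx with rfl | hx
    exacts [hy, (hs x hx).1]
  rw [← Finset.card_def, card_insert_of_notMem hys] at this
  omega

theorem not_isRoot_derivative_of_countP_pos_roots_le (hP : P ≠ 0)
    (hs : ∀ x ∈ s, 0 < x ∧ P.IsRoot x) (hcount : P.roots.countP (0 < ·) ≤ #s) {x : R}
    (hx : x ∈ s) : ¬ P.derivative.IsRoot x := by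
  intro hx'
  have := card_le_countP_pos_roots
    (cons_le_roots_of_isRoot_derivative hP (fun y hy => (hs y hy).2) hx hx') fun y hy => by
      rcases Multiset.mem_cons.1 hy with rfl | hy
      exacts [(hs y hx).1, (hs y hy).1]
  rw [Multiset.card_cons, ← Finset.card_def] at this
  omega

end Polynomial

theorem exists_pos_forall_pos_add_mul {ι : Type*} [Finite ι] {u v : ι → ℝ}
    (hu : ∀ j, 0 < u j) : ∃ δ > 0, ∀ j, 0 < u j + δ * v j := by
  have hsmall : ∀ᶠ δ in 𝓝 (0 : ℝ), ∀ j, 0 < u j + δ * v j :=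
    eventually_all.2 fun j => by
      have : Tendsto (fun δ => u j + δ * v j) (𝓝 0) (𝓝 (u j)) := by
        simpa using ((continuous_id.mul continuous_const).const_add (u j)).tendsto (0 : ℝ)
      exact this.eventually (eventually_gt_nhds (hu j))
  obtain ⟨δ, hδ, hpos⟩ :=
    ((hsmall.filter_mono nhdsWithin_le_nhds).and (self_mem_nhdsWithin (s := Set.Ioi 0))).exists
  exact ⟨δ, hpos, hδ⟩

theorem HasDerivAt.nonpos_of_le_on_Ioo {f : ℝ → ℝ} {f' a b : ℝ} (hf : HasDerivAt f f' a)
    (hab : a < b) (hle : ∀ y ∈ Set.Ioo a b, f y ≤ f a) : f' ≤ 0 := by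
  refine le_of_tendsto hf.tendsto_slope_zero_right ?_
  filter_upwards [Ioo_mem_nhdsGT (sub_pos.2 hab)] with t ht
  exact mul_nonpos_of_nonneg_of_nonpos (inv_nonneg.2 ht.1.le)
    (sub_nonpos.2 (hle _ ⟨by linarith [ht.1], by linarith [ht.2]⟩))

theorem neg_of_neg_of_forall_ne_zero {f : ℝ → ℝ} {a b : ℝ} (hab : a ≤ b)
    (hf : ContinuousOn f (Set.Icc a b)) (hb : f b < 0) (hne : ∀ y ∈ Set.Icc a b, f y ≠ 0) :
    f a < 0 := by
  by_contra! ha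
  obtain ⟨y, hy, hy0⟩ := intermediate_value_Icc' hab hf ⟨hb.le, ha⟩
  exact hne y hy hy0

theorem HasDerivAt.nonpos_of_forall_ne_zero {f : ℝ → ℝ} {f' a b : ℝ} (hf : HasDerivAt f f' a)
    (hcont : ContinuousOn f (Set.Icc a b)) (hab : a < b) (ha : f a = 0) (hb : f b < 0)
    (hne : ∀ y ∈ Set.Ioc a b, f y ≠ 0) : f' ≤ 0 :=
  hf.nonpos_of_le_on_Ioo hab fun y hy => by
    rw [ha]
    exact (neg_of_neg_of_forall_ne_zero hy.2.le (hcont.mono (Set.Icc_subset_Icc hy.1.le le_rfl))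
      hb fun z hz => hne z ⟨hy.1.trans_le hz.1, hz.2⟩).le

theorem exists_zeros_of_alternating_signs {k : ℕ} {f : ℝ → ℝ} (hf : Continuous f)
    {w : Fin (k + 1) → ℝ} (hw : StrictMono w)
    (hsign : ∀ j : Fin (k + 1), 0 < (-1) ^ (j : ℕ) * f (w j)) :
    ∃ x : Fin k → ℝ, (∀ j, x j ∈ Set.Ioo (w j.castSucc) (w j.succ)) ∧ ∀ j, f (x j) = 0 := by
  have hroot (j : Fin k) : ∃ x ∈ Set.Ioo (w j.castSucc) (w j.succ), f x = 0 := by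
    have hsucc := hsign j.succ
    rw [Fin.val_succ, pow_succ] at hsucc
    obtain ⟨x, hx, hx0⟩ := intermediate_value_Ioo' (hw Fin.castSucc_lt_succ).le
      (hf.const_mul ((-1) ^ (j : ℕ))).continuousOn ⟨by linarith, hsign j.castSucc⟩
    exact ⟨x, hx, neg_one_pow_mul_eq_zero_iff.1 hx0⟩
  choose x hxw hx0 using hroot
  exact ⟨x, hxw, hx0⟩

noncomputable def alternatingPolynomial {k : ℕ} (e : Fin k → ℕ) (c : Fin k → ℝ) : ℝ[X] :=
  ∑ i : Fin k, C ((-1) ^ (i : ℕ) * c i) * X ^ e i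

theorem alternatingPolynomial_snoc {k : ℕ} (e : Fin (k + 1) → ℕ) (c : Fin k → ℝ) (δ : ℝ) :
    alternatingPolynomial e (Fin.snoc c δ) =
      alternatingPolynomial (fun i => e i.castSucc) c +
        C ((-1) ^ k * δ) * X ^ e (Fin.last k) := by
  simp [alternatingPolynomial, Fin.sum_univ_castSucc]

theorem exists_alternatingPolynomial_alternating_signs :
    ∀ {k : ℕ} (e : Fin (k + 1) → ℕ), StrictMono e →
      ∃ c : Fin (k + 1) → ℝ, (∀ i, 0 < c i) ∧ ∃ w : Fin (k + 1) → ℝ, StrictMono w ∧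
        (∀ j, 0 < w j) ∧
        ∀ j : Fin (k + 1), 0 < (-1) ^ (j : ℕ) * (alternatingPolynomial e c).eval (w j)
  | 0, e, _ => ⟨fun _ => 1, fun _ => one_pos, fun _ => 1,
      Fin.strictMono_iff_lt_succ.2 finZeroElim, fun _ => one_pos,
      fun j => by simp [alternatingPolynomial, Fin.fin_one_eq_zero j]⟩
  | k + 1, e, he => by
    obtain ⟨c, hc, w, hw, hwpos, hsign⟩ :=
      exists_alternatingPolynomial_alternating_signs (fun i => e i.castSucc)
        (he.comp Fin.strictMono_castSucc)
    set Q := alternatingPolynomial (fun i => e i.castSucc) c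
    set d := e (Fin.last (k + 1))
    have hs : (-1 : ℝ) ^ (k + 1) * (-1) ^ (k + 1) = 1 := by
      rw [← pow_add, ← two_mul, pow_mul]; norm_num
    obtain ⟨δ, hδ, hold⟩ := exists_pos_forall_pos_add_mul
      (v := fun j : Fin (k + 1) => (-1) ^ (j : ℕ) * (-1) ^ (k + 1) * w j ^ d) hsign
    have hdeg : (C ((-1 : ℝ) ^ (k + 1)) * Q).degree < d := by
      rw [degree_C_mul (left_ne_zero_of_mul_eq_one hs)]
      exact degree_sum_C_mul_X_pow_lt _ _ _ fun i _ => he (Fin.castSucc_lt_last i)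
    obtain ⟨R, hnew, hRw⟩ := ((eventually_pos_eval_add_mul_pow hdeg hδ).and
      (eventually_gt_atTop (w (Fin.last k)))).exists
    refine ⟨Fin.snoc c δ, Fin.lastCases (by simpa) (by simpa), Fin.snoc w R, ?_, ?_, ?_⟩
    · simpa [Fin.insertNth_last'] using Fin.strictMono_insertNth_last hw R hRw
    · exact Fin.lastCases (by simpa using (hwpos (Fin.last k)).trans hRw) (by simpa)
    · refine Fin.lastCases ?_ fun j => ?_ <;>
        simp only [alternatingPolynomial_snoc, eval_add, eval_mul, eval_C, eval_pow, eval_X,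
          Fin.snoc_last, Fin.snoc_castSucc, Fin.val_last, Fin.val_castSucc]
      · rw [eval_mul, eval_C] at hnew
        linear_combination hnew - δ * R ^ d * hs
      · linear_combination hold j

theorem exists_alternatingPolynomial_simple_roots {k : ℕ} (e : Fin (k + 1) → ℕ)
    (he : StrictMono e) :
    ∃ c : Fin (k + 1) → ℝ, (∀ i, 0 < c i) ∧ ∃ x : Fin k → ℝ, StrictMono x ∧ (∀ i, 0 < x i) ∧
      (∀ i, (alternatingPolynomial e c).IsRoot (x i)) ∧
      (∀ y, 0 < y → (alternatingPolynomial e c).IsRoot y → ∃ i, y = x i) ∧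
      ∀ i : Fin k, (-1) ^ (i : ℕ) * (alternatingPolynomial e c).derivative.eval (x i) < 0 := by
  obtain ⟨c, hc, w, hw, hwpos, hsign⟩ := exists_alternatingPolynomial_alternating_signs e he
  set Q := alternatingPolynomial e c
  have hQ : Q ≠ 0 := fun h => by simpa [h] using hsign 0
  obtain ⟨x, hxw, hx0⟩ := exists_zeros_of_alternating_signs Q.continuous hw hsign
  have hx : StrictMono x := fun i j hij =>
    ((hxw i).2.trans_le (hw.monotone (Fin.succ_le_castSucc_iff.2 hij))).trans (hxw j).1
  have hxpos (i : Fin k) : 0 < x i := (hwpos _).trans (hxw i).1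
  have hs : ∀ y ∈ univ.image x, 0 < y ∧ Q.IsRoot y := by
    simp only [mem_image, mem_univ, true_and, forall_exists_index, forall_apply_eq_imp_iff]
    exact fun i => ⟨hxpos i, hx0 i⟩
  have hcount : Q.roots.countP (0 < ·) ≤ #(univ.image x) := by
    rw [card_image_of_injective _ hx.injective, card_univ, Fintype.card_fin]
    refine Q.countP_pos_roots_le_card_support_sub_one.trans (Nat.sub_le_of_le_add ?_)
    calc #Q.support ≤ #(univ.image e) := card_le_card (support_sum_C_mul_X_pow_subset _ _ _)
      _ ≤ k + 1 := card_image_le.trans (by simp)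
  have hunique (y : ℝ) (hy : 0 < y) (hy0 : Q.IsRoot y) : ∃ i, y = x i := by
    obtain ⟨i, -, rfl⟩ := mem_image.1 (mem_of_isRoot_of_countP_pos_roots_le hQ hs hcount hy hy0)
    exact ⟨i, rfl⟩
  refine ⟨c, hc, x, hx, hxpos, hx0, hunique, fun j => ?_⟩
  have hsucc := hsign j.succ
  rw [Fin.val_succ, pow_succ] at hsucc
  have hnonpos : (-1) ^ (j : ℕ) * Q.derivative.eval (x j) ≤ 0 := by
    refine ((Q.hasDerivAt (x j)).const_mul _).nonpos_of_forall_ne_zero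
      (Q.continuous.const_mul _).continuousOn (hxw j).2 (by simp [hx0 j])
      (by linarith) fun z hz hz0 => ?_
    obtain ⟨i, rfl⟩ := hunique z ((hxpos j).trans hz.1) (neg_one_pow_mul_eq_zero_iff.1 hz0)
    have hji : j < i := hx.lt_iff_lt.1 hz.1
    exact (hz.2.trans_lt ((hw.monotone (Fin.succ_le_castSucc_iff.2 hji)).trans_lt
      (hxw i).1)).false
  refine hnonpos.lt_of_ne fun h0 => ?_
  exact not_isRoot_derivative_of_countP_pos_roots_le hQ hs hcount
    (mem_image_of_mem x (mem_univ j)) (neg_one_pow_mul_eq_zero_iff.1 h0)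

theorem div_abs_mul_self_eq_mul_sign {α : Type*} [Field α] [LinearOrder α]
    [IsStrictOrderedRing α] (c x : α) : c / |x| * x = c * SignType.sign x := by
  rcases lt_trichotomy x 0 with hx | rfl | hx
  · rw [abs_of_neg hx, sign_neg hx, div_mul_eq_mul_div, div_neg, mul_div_assoc, div_self hx.ne]
    simp
  · simp
  · rw [abs_of_pos hx, sign_pos hx, div_mul_cancel₀ _ hx.ne']
    simp

theorem sign_eq_neg_one_pow_mul_sign {α : Type*} [Ring α] [LinearOrder α]
    [IsStrictOrderedRing α] {k : ℕ} {d : Fin (k + 1) → α}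
    (hd : ∀ i : Fin k, d i.castSucc * d i.succ < 0) (i : Fin (k + 1)) :
    SignType.sign (d i) = (-1) ^ (i : ℕ) * SignType.sign (d 0) := by
  induction i using Fin.induction with
  | zero => simp
  | succ i ih =>
    have hflip : SignType.sign (d i.succ) = -SignType.sign (d i.castSucc) := by
      rcases mul_neg_iff.1 (hd i) with ⟨h1, h2⟩ | ⟨h1, h2⟩ <;> simp [sign_pos, sign_neg, h1, h2]
    rw [hflip, ih, Fin.val_succ, Fin.val_castSucc, pow_succ, mul_neg_one, neg_mul]

theorem sum_div_abs_mul_mul_pow_eq_sign_mul_eval {k : ℕ} (e : Fin (k + 1) → ℕ)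
    (c : Fin (k + 1) → ℝ) {d : Fin (k + 1) → ℝ} (hd : ∀ i : Fin k, d i.castSucc * d i.succ < 0)
    (t : ℝ) :
    ∑ i, c i / |d i| * d i * t ^ e i =
      SignType.sign (d 0) * (alternatingPolynomial e c).eval t := by
  simp only [alternatingPolynomial, eval_finsetSum, eval_mul, eval_C, eval_pow, eval_X, mul_sum]
  refine sum_congr rfl fun i _ => ?_
  rw [div_abs_mul_self_eq_mul_sign, sign_eq_neg_one_pow_mul_sign hd i, SignType.coe_mul,
    SignType.coe_pow, SignType.coe_neg_one]
  ring

open Finset in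
/-- Every `T`-alternating one-species network (reactions `mᵢA → nᵢA` with
`m₀ < m₁ < ⋯ < m_T` and strictly alternating arrow directions) admits, for
some positive rate constants, exactly `T` nondegenerate positive steady states
`x₀ < x₁ < ⋯ < x_{T-1}`; when the arrow diagram starts with `→`
(`m₀ < n₀`) the `⌈T/2⌉` roots of even (0-based) index are exponentially stable
(derivative negative there), and when it starts with `←` (`n₀ < m₀`) the
`⌊T/2⌋` roots of odd index are exponentially stable. -/
theorem alternating_network_steady_states (T : ℕ)
    (m n : Fin (T + 1) → ℕ) (hm : StrictMono m) (hmn : ∀ i, m i ≠ n i)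
    (halt : ∀ i : Fin T,
      ((n i.castSucc : ℤ) - m i.castSucc) * ((n i.succ : ℤ) - m i.succ) < 0) :
    ∃ κ : Fin (T + 1) → ℝ, (∀ i, 0 < κ i) ∧
      ∃ x : Fin T → ℝ, StrictMono x ∧ (∀ i, 0 < x i) ∧
        (let p : ℝ → ℝ := fun t => ∑ i : Fin (T + 1), κ i * ((n i : ℝ) - m i) * t ^ (m i)
        (∀ i, p (x i) = 0) ∧
        (∀ i, deriv p (x i) ≠ 0) ∧
        (∀ y : ℝ, 0 < y → p y = 0 → ∃ i, y = x i) ∧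
        (m 0 < n 0 → ∀ i : Fin T, i.val % 2 = 0 → deriv p (x i) < 0) ∧
        (n 0 < m 0 → ∀ i : Fin T, i.val % 2 = 1 → deriv p (x i) < 0)) := by
  set d : Fin (T + 1) → ℝ := fun i => (n i : ℝ) - m i
  have hd (i : Fin (T + 1)) : d i ≠ 0 := sub_ne_zero.2 (mod_cast (hmn i).symm)
  have halt' (i : Fin T) : d i.castSucc * d i.succ < 0 := by
    simpa [d] using (Int.cast_lt (R := ℝ)).2 (halt i)
  obtain ⟨c, hc, x, hx, hxpos, hroot, hunique, hderiv⟩ :=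
    exists_alternatingPolynomial_simple_roots m hm
  set Q := alternatingPolynomial m c
  set ε : ℝ := (SignType.sign (d 0) : ℝ) with hε_def
  have hε : ε ≠ 0 := fun h => hd 0 (by rw [← sign_mul_abs (d 0), ← hε_def, h, zero_mul])
  refine ⟨fun i => c i / |d i|, fun i => div_pos (hc i) (abs_pos.2 (hd i)), x, hx, hxpos, ?_⟩
  intro p
  have hp : p = fun t => ε * Q.eval t :=
    funext (sum_div_abs_mul_mul_pow_eq_sign_mul_eval m c halt')
  have hderiv_p (t : ℝ) : deriv p t = ε * Q.derivative.eval t := by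
    rw [hp, deriv_const_mul _ Q.differentiableAt, Q.deriv]
  have hstable (i : Fin T) (hi : ε = (-1) ^ (i : ℕ)) : deriv p (x i) < 0 := by
    rw [hderiv_p, hi]
    exact hderiv i
  refine ⟨fun i => by simp [hp, (hroot i).eq_zero], fun i => ?_, fun y hy hy0 => ?_,
    fun h i hi => hstable i ?_, fun h i hi => hstable i ?_⟩
  · rw [hderiv_p]
    exact mul_ne_zero hε (neg_one_pow_mul_eq_zero_iff.not.1 (hderiv i).ne)
  · exact hunique y hy (by simpa [hp, hε] using hy0)
  · rw [(Nat.even_iff.2 hi).neg_one_pow, hε_def, sign_pos (sub_pos.2 (mod_cast h)),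
      SignType.coe_one]
  · rw [(Nat.odd_iff.2 hi).neg_one_pow, hε_def, sign_neg (sub_neg.2 (mod_cast h)),
      SignType.coe_neg_one]
end

section
/- Let y, y', ỹ, ỹ' ∈ ℤ_{≥0}^2 determine a two-species, two-reaction mass-action network with y' - y = -λ(ỹ' - ỹ) for some λ > 0, and set β_i = (y'_i - y_i)(ỹ_i - y_i). If β_1 β_2 > 0, then for every choice of positive rate constants and every stoichiometric compatibility class intersecting the positive quadrant, there is exactly one positive steady state. -/
open Real

set_option maxHeartbeats 1000000 in
lemma key_aux (c d C p q : ℝ) (hp : 0 < p) (hcq : 0 < c * q)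
    (hne : ∃ t : ℝ, 0 < t ∧ 0 < c * t + d) :
    ∃! t : ℝ, (0 < t ∧ 0 < c * t + d) ∧
      C + p * Real.log t + q * Real.log (c * t + d) = 0 := by
  have hc : c ≠ 0 := by rintro rfl; simp at hcq
  set h : ℝ → ℝ := fun t => C + p * Real.log t + q * Real.log (c * t + d) with hh
  -- strict monotonicity on the domain
  have hmono : ∀ t₁ t₂ : ℝ, (0 < t₁ ∧ 0 < c * t₁ + d) → (0 < t₂ ∧ 0 < c * t₂ + d) →
      t₁ < t₂ → h t₁ < h t₂ := by
    intro t₁ t₂ h₁ h₂ hlt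
    have hlog1 : Real.log t₁ < Real.log t₂ := Real.log_lt_log h₁.1 hlt
    rcases lt_or_gt_of_ne hc with hcneg | hcpos
    · have hq : q < 0 := by nlinarith
      have : c * t₂ + d < c * t₁ + d := by nlinarith
      have hlog2 : Real.log (c * t₂ + d) < Real.log (c * t₁ + d) :=
        Real.log_lt_log h₂.2 this
      have : q * Real.log (c * t₁ + d) < q * Real.log (c * t₂ + d) := by nlinarith
      simp only [hh]; nlinarith
    · have hq : 0 < q := by nlinarith
      have : c * t₁ + d < c * t₂ + d := by nlinarith
      have hlog2 : Real.log (c * t₁ + d) ≤ Real.log (c * t₂ + d) :=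
        Real.log_le_log h₁.2 this.le
      simp only [hh]; nlinarith
  -- existence of a sign change
  have hsign : ∃ t₁ t₂ : ℝ, (0 < t₁ ∧ 0 < c * t₁ + d) ∧ (0 < t₂ ∧ 0 < c * t₂ + d) ∧
      h t₁ < 0 ∧ 0 < h t₂ := by
    rcases lt_or_gt_of_ne hc with hcneg | hcpos
    · -- c < 0, q < 0, d > 0
      have hq : q < 0 := by nlinarith
      obtain ⟨t₀, ht₀, ht₀'⟩ := hne
      have hd : 0 < d := by nlinarith
      obtain ⟨R, hR⟩ : ∃ R : ℝ, R = d / (-c) := ⟨_, rfl⟩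
      have hRpos : 0 < R := by rw [hR]; exact div_pos hd (by linarith)
      have hcR : c * R = -d := by
        rw [hR, mul_div_assoc', div_eq_iff (show (-c) ≠ 0 from ne_of_gt (by linarith))]; ring
      -- lower point
      obtain ⟨K, hK⟩ : ∃ K : ℝ, K = C + q * Real.log (d/2) := ⟨_, rfl⟩
      obtain ⟨t₁, ht₁def⟩ : ∃ t₁ : ℝ, t₁ = min (R/2) (Real.exp (-(K + 1)/p)) := ⟨_, rfl⟩
      have ht₁pos : 0 < t₁ := ht₁def ▸ lt_min (by positivity) (Real.exp_pos _)
      have ht₁R : t₁ ≤ R/2 := ht₁def ▸ min_le_left _ _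
      have hlin₁ : d/2 ≤ c * t₁ + d := by nlinarith
      have ht₁mem : 0 < t₁ ∧ 0 < c * t₁ + d := ⟨ht₁pos, by linarith⟩
      have hval₁ : h t₁ < 0 := by
        have l1 : Real.log t₁ ≤ -(K + 1)/p := by
          calc Real.log t₁ ≤ Real.log (Real.exp (-(K + 1)/p)) :=
                Real.log_le_log ht₁pos (ht₁def ▸ min_le_right _ _)
            _ = -(K + 1)/p := Real.log_exp _
        have l2 : Real.log (d/2) ≤ Real.log (c * t₁ + d) :=
          Real.log_le_log (by positivity) hlin₁
        have l2' : q * Real.log (c * t₁ + d) ≤ q * Real.log (d/2) := by nlinarith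
        have l1' : p * Real.log t₁ ≤ -(K + 1) := by
          have := mul_le_mul_of_nonneg_left l1 hp.le
          calc p * Real.log t₁ ≤ p * (-(K+1)/p) := this
            _ = -(K+1) := by rw [mul_comm, div_mul_cancel₀ _ hp.ne']
        simp only [hh]; simp only [hK] at l1' l2' ⊢; linarith
      -- upper point
      obtain ⟨K₂, hK₂⟩ : ∃ K₂ : ℝ, K₂ = C + p * Real.log (R/2) := ⟨_, rfl⟩
      obtain ⟨ε, hεdef⟩ : ∃ ε : ℝ, ε = min (Real.exp ((-K₂ + 1)/q)) (d/2) := ⟨_, rfl⟩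
      have hεpos : 0 < ε := hεdef ▸ lt_min (Real.exp_pos _) (by positivity)
      obtain ⟨t₂, ht₂def⟩ : ∃ t₂ : ℝ, t₂ = R + ε / c := ⟨_, rfl⟩
      have hct₂ : c * t₂ + d = ε := by
        rw [ht₂def]; field_simp; linarith [hcR]
      have ht₂R : R/2 ≤ t₂ := by
        have hεd : ε ≤ d/2 := hεdef ▸ min_le_right _ _
        by_contra hcon
        push_neg at hcon
        have := mul_lt_mul_of_neg_left hcon hcneg
        nlinarith
      have ht₂pos : 0 < t₂ := by linarith
      have hval₂ : 0 < h t₂ := by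
        have l1 : Real.log (R/2) ≤ Real.log t₂ := Real.log_le_log (by positivity) ht₂R
        have l1' : p * Real.log (R/2) ≤ p * Real.log t₂ := by nlinarith
        have l2 : Real.log ε ≤ (-K₂ + 1)/q := by
          calc Real.log ε ≤ Real.log (Real.exp ((-K₂ + 1)/q)) :=
                Real.log_le_log hεpos (hεdef ▸ min_le_left _ _)
            _ = (-K₂ + 1)/q := Real.log_exp _
        have l2' : -K₂ + 1 ≤ q * Real.log ε := by
          have := mul_le_mul_of_nonpos_left l2 hq.le
          calc q * Real.log ε ≥ q * ((-K₂+1)/q) := this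
            _ = -K₂ + 1 := by rw [mul_comm, div_mul_cancel₀ _ hq.ne]
        simp only [hh]; rw [hct₂]; simp only [hK₂] at l1' l2' ⊢; linarith
      exact ⟨t₁, t₂, ht₁mem, ⟨ht₂pos, by rw [hct₂]; exact hεpos⟩, hval₁, hval₂⟩
    · -- c > 0, q > 0
      have hq : 0 < q := by nlinarith
      have hlower : ∃ t₁ : ℝ, (0 < t₁ ∧ 0 < c * t₁ + d) ∧ h t₁ < 0 := by
        rcases le_or_gt 0 d with hd | hd
        · -- d ≥ 0 : go to small t
          obtain ⟨K, hK⟩ : ∃ K : ℝ, K = C + q * Real.log (c + d) := ⟨_, rfl⟩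
          obtain ⟨t₁, ht₁def⟩ : ∃ t₁ : ℝ, t₁ = min 1 (Real.exp (-(K + 1)/p)) := ⟨_, rfl⟩
          have ht₁pos : 0 < t₁ := ht₁def ▸ lt_min one_pos (Real.exp_pos _)
          have ht₁1 : t₁ ≤ 1 := ht₁def ▸ min_le_left _ _
          have hctd : 0 < c * t₁ + d := by nlinarith
          have l1 : Real.log t₁ ≤ -(K + 1)/p := by
            calc Real.log t₁ ≤ Real.log (Real.exp (-(K + 1)/p)) :=
                  Real.log_le_log ht₁pos (ht₁def ▸ min_le_right _ _)
              _ = -(K + 1)/p := Real.log_exp _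
          have l1' : p * Real.log t₁ ≤ -(K + 1) := by
            calc p * Real.log t₁ ≤ p * (-(K+1)/p) := mul_le_mul_of_nonneg_left l1 hp.le
              _ = -(K+1) := by rw [mul_comm, div_mul_cancel₀ _ hp.ne']
          have l2 : Real.log (c * t₁ + d) ≤ Real.log (c + d) :=
            Real.log_le_log hctd (by nlinarith)
          have l2' : q * Real.log (c * t₁ + d) ≤ q * Real.log (c + d) := by nlinarith
          refine ⟨t₁, ⟨ht₁pos, hctd⟩, ?_⟩
          simp only [hh]; simp only [hK] at l1' l2' ⊢; linarith
        · -- d < 0 : go near t = -d/c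
          obtain ⟨L, hL⟩ : ∃ L : ℝ, L = -d/c := ⟨_, rfl⟩
          have hLpos : 0 < L := by rw [hL]; exact div_pos (by linarith) hcpos
          have hcL : c * L = -d := by
            rw [hL, mul_div_assoc', div_eq_iff hc]; ring
          have hLc : 0 < L + 1/c := by positivity
          obtain ⟨K, hK⟩ : ∃ K : ℝ, K = C + p * Real.log (L + 1/c) := ⟨_, rfl⟩
          obtain ⟨ε, hεdef⟩ : ∃ ε : ℝ, ε = min 1 (Real.exp (-(K + 1)/q)) := ⟨_, rfl⟩
          have hεpos : 0 < ε := hεdef ▸ lt_min one_pos (Real.exp_pos _)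
          obtain ⟨t₁, ht₁def⟩ : ∃ t₁ : ℝ, t₁ = L + ε / c := ⟨_, rfl⟩
          have ht₁pos : 0 < t₁ := by rw [ht₁def]; positivity
          have hct₁ : c * t₁ + d = ε := by
            rw [ht₁def]; field_simp; linarith [hcL]
          have ht₁le : t₁ ≤ L + 1/c := by
            rw [ht₁def]
            have hε1 : ε ≤ 1 := hεdef ▸ min_le_left _ _
            have hεc : ε / c ≤ 1 / c := div_le_div_of_nonneg_right hε1 hcpos.le
            linarith
          have l1 : Real.log t₁ ≤ Real.log (L + 1/c) := Real.log_le_log ht₁pos ht₁le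
          have l1' : p * Real.log t₁ ≤ p * Real.log (L + 1/c) := by nlinarith
          have l2 : Real.log ε ≤ -(K + 1)/q := by
            calc Real.log ε ≤ Real.log (Real.exp (-(K + 1)/q)) :=
                  Real.log_le_log hεpos (hεdef ▸ min_le_right _ _)
              _ = -(K + 1)/q := Real.log_exp _
          have l2' : q * Real.log ε ≤ -(K + 1) := by
            calc q * Real.log ε ≤ q * (-(K+1)/q) := mul_le_mul_of_nonneg_left l2 hq.le
              _ = -(K+1) := by rw [mul_comm, div_mul_cancel₀ _ hq.ne']
          refine ⟨t₁, ⟨ht₁pos, by rw [hct₁]; exact hεpos⟩, ?_⟩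
          simp only [hh]; rw [hct₁]; simp only [hK] at l1' l2' ⊢; linarith
      have hupper : ∃ t₂ : ℝ, (0 < t₂ ∧ 0 < c * t₂ + d) ∧ 0 < h t₂ := by
        obtain ⟨t₂, ht₂def⟩ : ∃ t₂ : ℝ, t₂ = max (max 1 ((1-d)/c)) (Real.exp ((1-C)/p)) := ⟨_, rfl⟩
        have ht₂1 : (1:ℝ) ≤ t₂ := ht₂def ▸ le_trans (le_max_left _ _) (le_max_left _ _)
        have ht₂pos : 0 < t₂ := by linarith
        have hct₂ : 1 ≤ c * t₂ + d := by
          have h1 : (1-d)/c ≤ t₂ := ht₂def ▸ le_trans (le_max_right _ _) (le_max_left _ _)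
          have := mul_le_mul_of_nonneg_left h1 hcpos.le
          rw [mul_div_assoc', mul_comm, mul_div_assoc, div_self hc, mul_one] at this
          linarith
        have l2 : 0 ≤ Real.log (c * t₂ + d) := Real.log_nonneg hct₂
        have l1 : (1-C)/p ≤ Real.log t₂ := by
          calc (1-C)/p = Real.log (Real.exp ((1-C)/p)) := (Real.log_exp _).symm
            _ ≤ Real.log t₂ := Real.log_le_log (Real.exp_pos _) (ht₂def ▸ le_max_right _ _)
        have l1' : 1 - C ≤ p * Real.log t₂ := by
          calc 1 - C = p * ((1-C)/p) := by rw [mul_comm, div_mul_cancel₀ _ (by positivity : p ≠ 0)]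
            _ ≤ p * Real.log t₂ := mul_le_mul_of_nonneg_left l1 hp.le
        refine ⟨t₂, ⟨ht₂pos, by linarith⟩, ?_⟩
        simp only [hh]; nlinarith
      obtain ⟨t₁, hm₁, hv₁⟩ := hlower
      obtain ⟨t₂, hm₂, hv₂⟩ := hupper
      exact ⟨t₁, t₂, hm₁, hm₂, hv₁, hv₂⟩
  obtain ⟨t₁, t₂, hm₁, hm₂, hv₁, hv₂⟩ := hsign
  have ht₁₂ : t₁ < t₂ := by
    rcases lt_trichotomy t₁ t₂ with h' | h' | h'
    · exact h'
    · exfalso; rw [h'] at hv₁; linarith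
    · exfalso; have := hmono t₂ t₁ hm₂ hm₁ h'; linarith
  have hsub : Set.Icc t₁ t₂ ⊆ {t | 0 < t ∧ 0 < c * t + d} := by
    intro t ht
    refine ⟨lt_of_lt_of_le hm₁.1 ht.1, ?_⟩
    rcases lt_or_gt_of_ne hc with hcneg | hcpos
    · nlinarith [ht.1, ht.2, hm₂.2]
    · nlinarith [ht.1, ht.2, hm₁.2]
  have hcont : ContinuousOn h (Set.Icc t₁ t₂) := by
    intro t ht
    have h' := hsub ht
    apply ContinuousAt.continuousWithinAt
    have c1 : ContinuousAt (fun t : ℝ => Real.log t) t := Real.continuousAt_log h'.1.ne'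
    have c2 : ContinuousAt (fun t : ℝ => Real.log (c * t + d)) t :=
      ContinuousAt.log (by fun_prop) h'.2.ne'
    exact (continuousAt_const.add (continuousAt_const.mul c1)).add (continuousAt_const.mul c2)
  have h0mem : (0:ℝ) ∈ Set.Icc (h t₁) (h t₂) := ⟨hv₁.le, hv₂.le⟩
  obtain ⟨t, htmem, hteq⟩ := intermediate_value_Icc ht₁₂.le hcont h0mem
  have hteq' : C + p * Real.log t + q * Real.log (c * t + d) = 0 := by
    simp only [hh] at hteq; exact hteq
  refine ⟨t, ⟨hsub htmem, hteq'⟩, ?_⟩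
  intro t' ⟨hm', hv'⟩
  have hv'' : h t' = 0 := by simp only [hh]; exact hv'
  rcases lt_trichotomy t' t with h' | h' | h'
  · exfalso; have := hmono t' t hm' (hsub htmem) h'; rw [hv'', hteq] at this; exact lt_irrefl _ this
  · exact h'
  · exfalso; have := hmono t t' (hsub htmem) hm' h'; rw [hv'', hteq] at this; exact lt_irrefl _ this


lemma main_aux (A B : Fin 2 → ℝ) (m n : Fin 2 → ℕ) (lam κ κt T : ℝ)
    (hlam : 0 < lam) (hκ : 0 < κ) (hκt : 0 < κt)
    (hdep : ∀ i, A i = -lam * B i)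
    (hβ : 0 < (A 0 * ((n 0 : ℝ) - m 0)) * (A 1 * ((n 1 : ℝ) - m 1)))
    (hex : ∃ x : Fin 2 → ℝ, (∀ i, 0 < x i) ∧ A 1 * x 0 + T = A 0 * x 1) :
    ∃! x : Fin 2 → ℝ, (∀ i, 0 < x i) ∧ A 1 * x 0 + T = A 0 * x 1 ∧
      ∀ i, κ * A i * (x 0 ^ m 0 * x 1 ^ m 1) + κt * B i * (x 0 ^ n 0 * x 1 ^ n 1) = 0 := by
  -- basic nonvanishing facts
  have h00 : A 0 * ((n 0 : ℝ) - m 0) ≠ 0 := by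
    intro hz; rw [hz] at hβ; simp at hβ
  have h11 : A 1 * ((n 1 : ℝ) - m 1) ≠ 0 := by
    intro hz; rw [hz] at hβ; simp at hβ
  have ha0 : A 0 ≠ 0 := left_ne_zero_of_mul h00
  have ha1 : A 1 ≠ 0 := left_ne_zero_of_mul h11
  have hP : ((n 0 : ℝ) - m 0) ≠ 0 := right_ne_zero_of_mul h00
  have hQ : ((n 1 : ℝ) - m 1) ≠ 0 := right_ne_zero_of_mul h11
  have hp : ((m 0 : ℝ) - n 0) ≠ 0 := by intro hz; apply hP; linarith
  have hq : ((m 1 : ℝ) - n 1) ≠ 0 := by intro hz; apply hQ; linarith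
  obtain ⟨c, hcdef⟩ : ∃ c : ℝ, c = A 1 / A 0 := ⟨_, rfl⟩
  obtain ⟨d, hddef⟩ : ∃ d : ℝ, d = T / A 0 := ⟨_, rfl⟩
  -- the line constraint in slope-intercept form
  have hline : ∀ x0 x1 : ℝ, (A 1 * x0 + T = A 0 * x1) ↔ x1 = c * x0 + d := by
    intro x0 x1
    rw [hcdef, hddef]
    constructor
    · intro hE; field_simp; linarith
    · intro hE; rw [hE]; field_simp
  -- sign condition for the 1-D problem
  have hA0sq : 0 < A 0 ^ 2 := by positivity
  have hprod : 0 < A 0 * A 1 * (((m 0:ℝ) - n 0) * ((m 1:ℝ) - n 1)) := by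
    have h1 : A 0 * A 1 * (((m 0:ℝ) - n 0) * ((m 1:ℝ) - n 1)) =
        (A 0 * ((n 0 : ℝ) - m 0)) * (A 1 * ((n 1 : ℝ) - m 1)) := by ring
    rw [h1]; exact hβ
  have hkeyineq : 0 < c * (((m 0:ℝ) - n 0) * ((m 1:ℝ) - n 1)) := by
    have h2 : c * (((m 0:ℝ) - n 0) * ((m 1:ℝ) - n 1)) =
        (A 0 * A 1 * (((m 0:ℝ) - n 0) * ((m 1:ℝ) - n 1))) / A 0 ^ 2 := by
      rw [hcdef]; field_simp
    rw [h2]; exact div_pos hprod hA0sq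
  -- the 1-D equation via logarithms
  have logprod : ∀ (K z w : ℝ) (a b : ℕ), 0 < K → 0 < z → 0 < w →
      Real.log (K * (z ^ a * w ^ b)) =
        Real.log K + (a : ℝ) * Real.log z + (b : ℝ) * Real.log w := by
    intro K z w a b hK hz hw
    rw [Real.log_mul (ne_of_gt hK) (by positivity),
        Real.log_mul (by positivity) (by positivity), Real.log_pow, Real.log_pow]
    ring
  have heqv : ∀ t : ℝ, 0 < t → 0 < c * t + d →
      ((κ * lam * (t ^ m 0 * (c*t+d) ^ m 1) = κt * (t ^ n 0 * (c*t+d) ^ n 1)) ↔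
        (Real.log (κ * lam) - Real.log κt) + ((m 0:ℝ) - n 0) * Real.log t +
          ((m 1:ℝ) - n 1) * Real.log (c*t+d) = 0) := by
    intro t ht htc
    have hκl : 0 < κ * lam := mul_pos hκ hlam
    constructor
    · intro hE
      have h' := congrArg Real.log hE
      rw [logprod _ _ _ _ _ hκl ht htc, logprod _ _ _ _ _ hκt ht htc] at h'
      linear_combination h'
    · intro hE
      have hL : 0 < κ * lam * (t ^ m 0 * (c*t+d) ^ m 1) := by positivity
      have hR : 0 < κt * (t ^ n 0 * (c*t+d) ^ n 1) := by positivity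
      apply Real.log_injOn_pos (Set.mem_Ioi.2 hL) (Set.mem_Ioi.2 hR)
      rw [logprod _ _ _ _ _ hκl ht htc, logprod _ _ _ _ _ hκt ht htc]
      linear_combination hE
  -- reduction of the steady-state system to one scalar equation
  have hred : ∀ x0 x1 : ℝ,
      ((∀ i, κ * A i * (x0 ^ m 0 * x1 ^ m 1) + κt * B i * (x0 ^ n 0 * x1 ^ n 1) = 0) ↔
        κ * lam * (x0 ^ m 0 * x1 ^ m 1) = κt * (x0 ^ n 0 * x1 ^ n 1)) := by
    intro x0 x1
    constructor
    · intro hall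
      have hb0 : B 0 ≠ 0 := by
        intro hz; apply ha0; rw [hdep 0, hz]; ring
      have h0 := hall 0
      rw [hdep 0] at h0
      have hfac : B 0 * (κt * (x0 ^ n 0 * x1 ^ n 1) - κ * lam * (x0 ^ m 0 * x1 ^ m 1)) = 0 := by
        linear_combination h0
      rcases mul_eq_zero.1 hfac with hz | hz
      · exact absurd hz hb0
      · linarith
    · intro he i
      rw [hdep i]
      linear_combination (-(B i)) * he
  -- nonemptiness of the 1-D domain
  obtain ⟨x₀, hx₀pos, hx₀line⟩ := hex
  have hne : ∃ t : ℝ, 0 < t ∧ 0 < c * t + d := by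
    refine ⟨x₀ 0, hx₀pos 0, ?_⟩
    rw [← (hline (x₀ 0) (x₀ 1)).1 hx₀line]
    exact hx₀pos 1
  -- the unique solution of the 1-D equation
  have hkey : ∃! t : ℝ, (0 < t ∧ 0 < c * t + d) ∧
      (Real.log (κ * lam) - Real.log κt) + ((m 0:ℝ) - n 0) * Real.log t +
        ((m 1:ℝ) - n 1) * Real.log (c*t+d) = 0 := by
    rcases lt_or_gt_of_ne hp with hplt | hpgt
    · -- (m 0 : ℝ) - n 0 < 0 : apply key_aux with negated coefficients
      have hcq : 0 < c * (-((m 1:ℝ) - n 1)) := by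
        by_contra hcon
        push_neg at hcon
        nlinarith [hkeyineq]
      obtain ⟨t, ⟨htm, hte⟩, hu⟩ := key_aux c d
        (-(Real.log (κ * lam) - Real.log κt)) (-((m 0:ℝ) - n 0)) (-((m 1:ℝ) - n 1))
        (by linarith) hcq hne
      refine ⟨t, ⟨htm, by linarith⟩, ?_⟩
      intro t' ⟨h1, h2⟩
      exact hu t' ⟨h1, by linarith⟩
    · have hcq : 0 < c * ((m 1:ℝ) - n 1) := by
        by_contra hcon
        push_neg at hcon
        nlinarith [hkeyineq]
      exact key_aux c d (Real.log (κ * lam) - Real.log κt) ((m 0:ℝ) - n 0)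
        ((m 1:ℝ) - n 1) hpgt hcq hne
  obtain ⟨t, ⟨⟨ht, htc⟩, hte⟩, hu⟩ := hkey
  refine ⟨![t, c * t + d], ⟨?_, ?_, ?_⟩, ?_⟩
  · intro i
    fin_cases i
    · simpa using ht
    · simpa using htc
  · simp only [Matrix.cons_val_zero, Matrix.cons_val_one, Matrix.head_cons]
    exact (hline t (c * t + d)).2 rfl
  · simp only [Matrix.cons_val_zero, Matrix.cons_val_one, Matrix.head_cons]
    exact (hred t (c * t + d)).2 ((heqv t ht htc).2 hte)
  · intro x ⟨hxpos, hxline, hxsteady⟩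
    have hx1 : x 1 = c * x 0 + d := (hline (x 0) (x 1)).1 hxline
    have hx0pos : 0 < x 0 := hxpos 0
    have hx1pos : 0 < c * x 0 + d := hx1 ▸ hxpos 1
    have hsc : κ * lam * (x 0 ^ m 0 * (c * x 0 + d) ^ m 1) =
        κt * (x 0 ^ n 0 * (c * x 0 + d) ^ n 1) := by
      rw [← hx1]; exact (hred (x 0) (x 1)).1 hxsteady
    have hx0eq : x 0 = t :=
      hu (x 0) ⟨⟨hx0pos, hx1pos⟩, (heqv (x 0) hx0pos hx1pos).1 hsc⟩
    funext i
    fin_cases i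
    · exact hx0eq
    · show x 1 = c * t + d
      rw [hx1, hx0eq]


/-- Two-species, two-reaction mass-action network with reaction vectors that
are negative scalar multiples of each other.  If `β₁β₂ > 0`, where
`βᵢ = (y'ᵢ - yᵢ)(ỹᵢ - yᵢ)`, then for every choice of positive rate constants
and every stoichiometric compatibility class meeting the open positive
quadrant, there is exactly one positive steady state. -/
theorem two_species_two_reaction_unique_steady_state
    (y y' yt yt' : Fin 2 → ℕ) (lam : ℝ) (hlam : 0 < lam)
    (hdep : ∀ i, (y' i : ℝ) - y i = -lam * ((yt' i : ℝ) - yt i))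
    (hβ : 0 < (((y' 0 : ℤ) - y 0) * ((yt 0 : ℤ) - y 0)) *
              (((y' 1 : ℤ) - y 1) * ((yt 1 : ℤ) - y 1))) :
    ∀ κ κt : ℝ, 0 < κ → 0 < κt → ∀ T : ℝ,
      (∃ x : Fin 2 → ℝ, (∀ i, 0 < x i) ∧
        ((y' 1 : ℝ) - y 1) * x 0 + T = ((y' 0 : ℝ) - y 0) * x 1) →
      ∃! x : Fin 2 → ℝ,
        (∀ i, 0 < x i) ∧
        ((y' 1 : ℝ) - y 1) * x 0 + T = ((y' 0 : ℝ) - y 0) * x 1 ∧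
        ∀ i, κ * ((y' i : ℝ) - y i) * (x 0 ^ (y 0) * x 1 ^ (y 1)) +
             κt * ((yt' i : ℝ) - yt i) * (x 0 ^ (yt 0) * x 1 ^ (yt 1)) = 0 := by
  intro κ κt hκ hκt T hex
  have hβR : (0:ℝ) < ((((y' 0 : ℕ):ℝ) - y 0) * (((yt 0 : ℕ):ℝ) - y 0)) *
      ((((y' 1 : ℕ):ℝ) - y 1) * (((yt 1 : ℕ):ℝ) - y 1)) := by exact_mod_cast hβ
  exact main_aux (fun i => (y' i : ℝ) - y i) (fun i => (yt' i : ℝ) - yt i) y yt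
    lam κ κt T hlam hκ hκt hdep hβR hex
end

section
/- Let y, y', ỹ, ỹ' ∈ ℤ_{≥0}^2 determine a two-species, two-reaction mass-action network with y' - y = -λ(ỹ' - ỹ), λ > 0, β_1 β_2 < 0 (where β_i = (y'_i - y_i)(ỹ_i - y_i)), and ỹ - y not a scalar multiple of (1, -1). Then there exist positive rate constants and a stoichiometric compatibility class containing exactly two positive steady states, both nondegenerate, exactly one of which is exponentially stable. -/
/-!
Write `(m, n) = y - ỹ` and `γ` for the slope of the class. Since the reaction vectors point in
opposite directions, taking `κ̃ (ỹ'₁ - ỹ₁) = -E κ (y'₁ - y₁)` makes the reduced field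
`φ(a) = κ (y'₁ - y₁) (e^{L(a)} - E) a^{ỹ₁} (γa + c)^{ỹ₂}` on the positive part of the class,
where `L(a) = m log a + n log (γa + c)`. So the steady states are the solutions of `L = log E`,
and at each of them `φ' = κ (y'₁ - y₁) E L' a^{ỹ₁} (γa + c)^{ỹ₂}`. The numerator of `L'` is
`m (γa + c) + nγa = (m + n) γ (a - x₀)`, and `β₁β₂ < 0` lets us choose `c` so that `x₀` is
positive and on the class. Hence `L` has a single strict extremum there: a level just past it is
attained exactly twice, on opposite sides of `x₀`, where `L'` and so `φ'` have opposite signs.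
-/

open Set Real Topology

theorem exists_level_eq_pair_of_strictAntiOn_of_strictMonoOn {ψ : ℝ → ℝ} {S : Set ℝ} {x₀ : ℝ}
    (hS : IsOpen S) (hx₀ : x₀ ∈ S) (hψ : ContinuousOn ψ S)
    (hanti : StrictAntiOn ψ (S ∩ Iic x₀)) (hmono : StrictMonoOn ψ (S ∩ Ici x₀)) :
    ∃ t a₁ a₂, a₁ ∈ S ∧ a₂ ∈ S ∧ a₁ < x₀ ∧ x₀ < a₂ ∧ ψ a₁ = t ∧ ψ a₂ = t ∧
      ∀ a ∈ S, ψ a = t → a = a₁ ∨ a = a₂ := by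
  obtain ⟨l, u, ⟨hl, hu⟩, hlu⟩ := mem_nhds_iff_exists_Ioo_subset.1 (hS.mem_nhds hx₀)
  obtain ⟨b₁, hlb₁, hb₁⟩ := exists_between hl
  obtain ⟨b₂, hb₂, hb₂u⟩ := exists_between hu
  have hleft : Icc b₁ x₀ ⊆ S := fun x hx => hlu ⟨hlb₁.trans_le hx.1, hx.2.trans_lt hu⟩
  have hright : Icc x₀ b₂ ⊆ S := fun x hx => hlu ⟨hl.trans_le hx.1, hx.2.trans_lt hb₂u⟩
  have hψb₁ : ψ x₀ < ψ b₁ :=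
    hanti ⟨hleft (left_mem_Icc.2 hb₁.le), hb₁.le⟩ ⟨hx₀, self_mem_Iic⟩ hb₁
  have hψb₂ : ψ x₀ < ψ b₂ :=
    hmono ⟨hx₀, self_mem_Ici⟩ ⟨hright (right_mem_Icc.2 hb₂.le), hb₂.le⟩ hb₂
  set t := min (ψ b₁) (ψ b₂)
  have ht : ψ x₀ < t := lt_min hψb₁ hψb₂
  obtain ⟨a₁, ha₁, hψa₁⟩ := intermediate_value_Icc' hb₁.le (hψ.mono hleft)
    ⟨ht.le, min_le_left _ _⟩
  obtain ⟨a₂, ha₂, hψa₂⟩ := intermediate_value_Icc hb₂.le (hψ.mono hright)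
    ⟨ht.le, min_le_right _ _⟩
  have ha₁x₀ : a₁ < x₀ := ha₁.2.lt_of_ne (by rintro rfl; exact ht.ne hψa₁)
  have hx₀a₂ : x₀ < a₂ := ha₂.1.lt_of_ne' (by rintro rfl; exact ht.ne hψa₂)
  refine ⟨t, a₁, a₂, hleft ha₁, hright ha₂, ha₁x₀, hx₀a₂, hψa₁, hψa₂, fun a ha hψa => ?_⟩
  rcases le_total a x₀ with hax₀ | hx₀a
  · exact .inl <| hanti.injOn ⟨ha, hax₀⟩ ⟨hleft ha₁, ha₁.2⟩ (hψa.trans hψa₁.symm)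
  · exact .inr <| hmono.injOn ⟨ha, hx₀a⟩ ⟨hright ha₂, ha₂.1⟩ (hψa.trans hψa₂.symm)

theorem strictAntiOn_Iic_and_strictMonoOn_Ici_of_hasDerivAt {ψ ψ' : ℝ → ℝ} {S : Set ℝ}
    {x₀ : ℝ} (hS : IsOpen S) (hSc : Convex ℝ S) (hψ : ∀ x ∈ S, HasDerivAt ψ (ψ' x) x)
    (hneg : ∀ x ∈ S, x < x₀ → ψ' x < 0) (hpos : ∀ x ∈ S, x₀ < x → 0 < ψ' x) :
    StrictAntiOn ψ (S ∩ Iic x₀) ∧ StrictMonoOn ψ (S ∩ Ici x₀) := by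
  have hcont : ContinuousOn ψ S := fun x hx => (hψ x hx).continuousAt.continuousWithinAt
  constructor
  · refine strictAntiOn_of_deriv_neg (hSc.inter (convex_Iic x₀)) (hcont.mono inter_subset_left)
      fun x hx => ?_
    rw [interior_inter, hS.interior_eq, interior_Iic] at hx
    exact (hψ x hx.1).deriv ▸ hneg x hx.1 hx.2
  · refine strictMonoOn_of_deriv_pos (hSc.inter (convex_Ici x₀)) (hcont.mono inter_subset_left)
      fun x hx => ?_
    rw [interior_inter, hS.interior_eq, interior_Ici] at hx
    exact (hψ x hx.1).deriv ▸ hpos x hx.1 hx.2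

theorem convex_setOf_pos_and_affine_pos (γ c : ℝ) :
    Convex ℝ {a : ℝ | 0 < a ∧ 0 < γ * a + c} := by
  intro x hx y hy s t hs ht hst
  have hu : γ * (s • x + t • y) + c = s • (γ * x + c) + t • (γ * y + c) := by
    simp only [smul_eq_mul]; linear_combination c * hst.symm
  exact ⟨convex_Ioi (0 : ℝ) hx.1 hy.1 hs ht hst, hu ▸ convex_Ioi (0 : ℝ) hx.2 hy.2 hs ht hst⟩

theorem isOpen_setOf_pos_and_affine_pos (γ c : ℝ) :
    IsOpen {a : ℝ | 0 < a ∧ 0 < γ * a + c} :=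
  (isOpen_lt continuous_const continuous_id).inter
    (isOpen_lt continuous_const (by fun_prop : Continuous fun a => γ * a + c))

theorem HasDerivAt.mul_of_left_eq_zero {𝕜 : Type*} [NontriviallyNormedField 𝕜] {f g : 𝕜 → 𝕜}
    {f' x : 𝕜} (hf : HasDerivAt f f' x) (hfx : f x = 0) (hg : DifferentiableAt 𝕜 g x) :
    HasDerivAt (fun y => f y * g y) (f' * g x) x := by
  have h := hf.mul hg.hasDerivAt
  rwa [hfx, zero_mul, add_zero] at h

noncomputable def logMonomial (m n γ c a : ℝ) : ℝ := m * log a + n * log (γ * a + c)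

theorem hasDerivAt_logMonomial (m n γ : ℝ) {c a : ℝ} (ha : 0 < a) (hu : 0 < γ * a + c) :
    HasDerivAt (logMonomial m n γ c)
      ((m * (γ * a + c) + n * γ * a) / (a * (γ * a + c))) a := by
  have hlin : HasDerivAt (fun x => γ * x + c) γ a := by
    simpa using ((hasDerivAt_id a).const_mul γ).add_const c
  refine (((hasDerivAt_log ha.ne').const_mul m).add
    ((hlin.log hu.ne').const_mul n)).congr_deriv ?_
  generalize γ * a + c = u at hu ⊢
  field_simp

theorem exists_class_logMonomial_two_level_points {m n γ : ℝ} (hmnγ : m * n * γ < 0)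
    (hmn : m + n ≠ 0) :
    ∃ c t a₁ a₂ : ℝ, 0 < a₁ ∧ a₁ < a₂ ∧ 0 < γ * a₁ + c ∧ 0 < γ * a₂ + c ∧
      logMonomial m n γ c a₁ = t ∧ logMonomial m n γ c a₂ = t ∧
      (∀ a, 0 < a → 0 < γ * a + c → logMonomial m n γ c a = t → a = a₁ ∨ a = a₂) ∧
      (m * (γ * a₁ + c) + n * γ * a₁) * (m * (γ * a₂ + c) + n * γ * a₂) < 0 := by
  have hn : n ≠ 0 := by rintro rfl; simp at hmnγ
  have hγ : γ ≠ 0 := by rintro rfl; simp at hmnγ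
  set σ := (m + n) * γ
  have hσ : σ ≠ 0 := mul_ne_zero hmn hγ
  set c := (m + n) * n * γ ^ 2
  set x₀ := -(m * n * γ)
  -- `c` is chosen so that the only critical point `x₀` of `logMonomial` is positive and on the
  -- class: `γ * x₀ + c = (n * γ) ^ 2`
  have hnum : ∀ a, m * (γ * a + c) + n * γ * a = σ * (a - x₀) := fun a => by ring
  set S := {a : ℝ | 0 < a ∧ 0 < γ * a + c}
  have hS : IsOpen S := isOpen_setOf_pos_and_affine_pos γ c
  have hx₀ : x₀ ∈ S := ⟨by linarith, by
    rw [show γ * x₀ + c = (n * γ) ^ 2 by ring]; have := mul_ne_zero hn hγ; positivity⟩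
  have hψ : ∀ x ∈ S, HasDerivAt (fun a => σ * logMonomial m n γ c a)
      (σ ^ 2 * (x - x₀) / (x * (γ * x + c))) x := fun x hx =>
    ((hasDerivAt_logMonomial m n γ hx.1 hx.2).const_mul σ).congr_deriv (by rw [hnum]; ring)
  obtain ⟨hanti, hmono⟩ := strictAntiOn_Iic_and_strictMonoOn_Ici_of_hasDerivAt hS
    (convex_setOf_pos_and_affine_pos γ c) hψ
    (fun x hx hlt => div_neg_of_neg_of_pos
      (mul_neg_of_pos_of_neg (by positivity) (sub_neg.2 hlt)) (mul_pos hx.1 hx.2))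
    (fun x hx hgt => div_pos (mul_pos (by positivity) (sub_pos.2 hgt)) (mul_pos hx.1 hx.2))
  obtain ⟨t, a₁, a₂, ha₁, ha₂, ha₁x₀, hx₀a₂, hψa₁, hψa₂, huniq⟩ :=
    exists_level_eq_pair_of_strictAntiOn_of_strictMonoOn hS hx₀
      (fun x hx => (hψ x hx).continuousAt.continuousWithinAt) hanti hmono
  have hlevel : ∀ a, σ * logMonomial m n γ c a = t ↔ logMonomial m n γ c a = t / σ :=
    fun a => by rw [eq_div_iff hσ, mul_comm]
  refine ⟨c, t / σ, a₁, a₂, ha₁.1, ha₁x₀.trans hx₀a₂, ha₁.2, ha₂.2, (hlevel a₁).1 hψa₁,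
    (hlevel a₂).1 hψa₂, fun a ha hu hLa => huniq a ⟨ha, hu⟩ ((hlevel a).2 hLa), ?_⟩
  rw [hnum, hnum, mul_mul_mul_comm]
  exact mul_neg_of_pos_of_neg (mul_self_pos.2 hσ)
    (mul_neg_of_neg_of_pos (sub_neg.2 ha₁x₀) (sub_pos.2 hx₀a₂))

/-- The first component of the mass-action vector field along the class `x₂ = γ x₁ + c`, with
source complexes `(e₁, f₁)` and `(e₂, f₂)` and coefficients `k = κ (y'₁ - y₁)`,
`kt = κ̃ (ỹ'₁ - ỹ₁)`. -/
def reducedField (e₁ f₁ e₂ f₂ : ℕ) (k kt γ c a : ℝ) : ℝ :=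
  k * (a ^ e₁ * (γ * a + c) ^ f₁) + kt * (a ^ e₂ * (γ * a + c) ^ f₂)

section reducedField

variable (e₁ f₁ e₂ f₂ : ℕ) {k γ c a : ℝ}

theorem reducedField_eq_of_pos (kt : ℝ) (ha : 0 < a) (hu : 0 < γ * a + c) :
    reducedField e₁ f₁ e₂ f₂ k kt γ c a =
      (k * exp (logMonomial ((e₁ : ℝ) - e₂) ((f₁ : ℝ) - f₂) γ c a) + kt) *
        (a ^ e₂ * (γ * a + c) ^ f₂) := by
  have hpow : ∀ (x : ℝ) (j : ℕ), 0 < x → x ^ j = exp (j * log x) := fun x j hx => by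
    rw [exp_nat_mul, exp_log hx]
  simp only [reducedField, logMonomial, hpow a _ ha, hpow _ _ hu, ← exp_add, add_mul, mul_assoc]
  ring_nf

theorem reducedField_eq_zero_iff (hk : k ≠ 0) (t : ℝ) (ha : 0 < a) (hu : 0 < γ * a + c) :
    reducedField e₁ f₁ e₂ f₂ k (-(k * exp t)) γ c a = 0 ↔
      logMonomial ((e₁ : ℝ) - e₂) ((f₁ : ℝ) - f₂) γ c a = t := by
  rw [reducedField_eq_of_pos e₁ f₁ e₂ f₂ _ ha hu, mul_eq_zero, or_iff_left (by positivity),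
    ← mul_neg, ← mul_add, mul_eq_zero, or_iff_right hk, ← sub_eq_add_neg, sub_eq_zero, exp_eq_exp]

theorem deriv_reducedField_of_logMonomial_eq {t : ℝ} (ha : 0 < a) (hu : 0 < γ * a + c)
    (hL : logMonomial ((e₁ : ℝ) - e₂) ((f₁ : ℝ) - f₂) γ c a = t) :
    deriv (reducedField e₁ f₁ e₂ f₂ k (-(k * exp t)) γ c) a =
      k * exp t * ((((e₁ : ℝ) - e₂) * (γ * a + c) + ((f₁ : ℝ) - f₂) * γ * a) /
        (a * (γ * a + c))) * (a ^ e₂ * (γ * a + c) ^ f₂) := by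
  have heq : reducedField e₁ f₁ e₂ f₂ k (-(k * exp t)) γ c =ᶠ[𝓝 a] fun x =>
      (k * exp (logMonomial ((e₁ : ℝ) - e₂) ((f₁ : ℝ) - f₂) γ c x) + -(k * exp t)) *
        (x ^ e₂ * (γ * x + c) ^ f₂) :=
    Filter.eventually_of_mem ((isOpen_setOf_pos_and_affine_pos γ c).mem_nhds ⟨ha, hu⟩)
      fun x hx => reducedField_eq_of_pos e₁ f₁ e₂ f₂ _ hx.1 hx.2
  have hfactor := ((hasDerivAt_logMonomial ((e₁ : ℝ) - e₂) ((f₁ : ℝ) - f₂) γ ha hu).exp.const_mul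
    k).add_const (-(k * exp t))
  rw [heq.deriv_eq, (hfactor.mul_of_left_eq_zero (by rw [hL]; ring) (by fun_prop)).deriv, hL]
  ring

end reducedField

def HasExactlyTwoNondegeneratePositiveZeros (φ : ℝ → ℝ) (γ c : ℝ) : Prop :=
  ∃ a₁ a₂ : ℝ, 0 < a₁ ∧ a₁ < a₂ ∧
    0 < γ * a₁ + c ∧ 0 < γ * a₂ + c ∧
    φ a₁ = 0 ∧ φ a₂ = 0 ∧
    deriv φ a₁ ≠ 0 ∧ deriv φ a₂ ≠ 0 ∧
    ((deriv φ a₁ < 0 ∧ 0 < deriv φ a₂) ∨ (0 < deriv φ a₁ ∧ deriv φ a₂ < 0)) ∧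
    ∀ a : ℝ, 0 < a → 0 < γ * a + c → φ a = 0 → a = a₁ ∨ a = a₂

theorem exists_rates_hasExactlyTwoNondegeneratePositiveZeros (e₁ f₁ e₂ f₂ : ℕ)
    {p pt q lam : ℝ} (hlam : 0 < lam) (hp : p = -lam * pt)
    (hβ : p * q * ((e₁ : ℝ) - e₂) * ((f₁ : ℝ) - f₂) < 0)
    (hmn : ((e₁ : ℝ) - e₂) + ((f₁ : ℝ) - f₂) ≠ 0) :
    ∃ κ κt c : ℝ, 0 < κ ∧ 0 < κt ∧ HasExactlyTwoNondegeneratePositiveZeros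
      (reducedField e₁ f₁ e₂ f₂ (κ * p) (κt * pt) (q / p) c) (q / p) c := by
  have hp0 : p ≠ 0 := by rintro rfl; simp at hβ
  have hmnγ : ((e₁ : ℝ) - e₂) * ((f₁ : ℝ) - f₂) * (q / p) < 0 := by
    rw [show ((e₁ : ℝ) - e₂) * ((f₁ : ℝ) - f₂) * (q / p) =
      p * q * ((e₁ : ℝ) - e₂) * ((f₁ : ℝ) - f₂) / p ^ 2 by field_simp]
    exact div_neg_of_neg_of_pos hβ (by positivity)
  obtain ⟨c, t, a₁, a₂, ha₁, ha₁₂, hu₁, hu₂, hL₁, hL₂, huniq, hsign⟩ :=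
    exists_class_logMonomial_two_level_points hmnγ hmn
  have ha₂ := ha₁.trans ha₁₂
  refine ⟨1, lam * exp t, c, one_pos, by positivity, ?_⟩
  rw [one_mul, show lam * exp t * pt = -(p * exp t) by rw [hp]; ring]
  set φ := reducedField e₁ f₁ e₂ f₂ p (-(p * exp t)) (q / p) c
  have hprod : deriv φ a₁ * deriv φ a₂ < 0 := by
    rw [deriv_reducedField_of_logMonomial_eq e₁ f₁ e₂ f₂ ha₁ hu₁ hL₁,
      deriv_reducedField_of_logMonomial_eq e₁ f₁ e₂ f₂ ha₂ hu₂ hL₂]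
    have hP₁ : 0 < a₁ ^ e₂ * (q / p * a₁ + c) ^ f₂ / (a₁ * (q / p * a₁ + c)) := by positivity
    have hP₂ : 0 < a₂ ^ e₂ * (q / p * a₂ + c) ^ f₂ / (a₂ * (q / p * a₂ + c)) := by positivity
    linear_combination mul_neg_of_neg_of_pos
      (mul_neg_of_pos_of_neg (by positivity : 0 < (p * exp t) ^ 2) hsign) (mul_pos hP₁ hP₂)
  refine ⟨a₁, a₂, ha₁, ha₁₂, hu₁, hu₂, (reducedField_eq_zero_iff e₁ f₁ e₂ f₂ hp0 t ha₁ hu₁).2 hL₁,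
    (reducedField_eq_zero_iff e₁ f₁ e₂ f₂ hp0 t ha₂ hu₂).2 hL₂, left_ne_zero_of_mul hprod.ne,
    right_ne_zero_of_mul hprod.ne, (mul_neg_iff.1 hprod).symm, fun a ha hu h0 => ?_⟩
  exact huniq a ha hu ((reducedField_eq_zero_iff e₁ f₁ e₂ f₂ hp0 t ha hu).1 h0)

/-- Two-species, two-reaction mass-action network whose reaction vectors are
negative scalar multiples of each other, with `β₁β₂ < 0` and `ỹ - y` not a
scalar multiple of `(1,-1)`.  Then some choice of positive rate constants and
some stoichiometric compatibility class (a line `x₂ = γx₁ + c` with `γ` the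
common slope of the reaction vectors) contains exactly two positive steady
states, both nondegenerate for the reduced 1-dimensional dynamics `φ`, with
exactly one of them exponentially stable (`φ' < 0`). -/
theorem two_species_two_reaction_two_nondegenerate_steady_states
    (y y' yt yt' : Fin 2 → ℕ) (lam : ℝ) (hlam : 0 < lam)
    (hdep : ∀ i, (y' i : ℝ) - y i = -lam * ((yt' i : ℝ) - yt i))
    (hβ : (((y' 0 : ℤ) - y 0) * ((yt 0 : ℤ) - y 0)) *
          (((y' 1 : ℤ) - y 1) * ((yt 1 : ℤ) - y 1)) < 0)
    (hslope : (yt 1 : ℝ) - y 1 ≠ -((yt 0 : ℝ) - y 0)) :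
    ∃ κ κt c : ℝ, 0 < κ ∧ 0 < κt ∧
      (let γ : ℝ := ((y' 1 : ℝ) - y 1) / ((y' 0 : ℝ) - y 0)
      let φ : ℝ → ℝ := fun a =>
        κ * ((y' 0 : ℝ) - y 0) * (a ^ (y 0) * (γ * a + c) ^ (y 1)) +
        κt * ((yt' 0 : ℝ) - yt 0) * (a ^ (yt 0) * (γ * a + c) ^ (yt 1))
      ∃ a₁ a₂ : ℝ, 0 < a₁ ∧ a₁ < a₂ ∧
        0 < γ * a₁ + c ∧ 0 < γ * a₂ + c ∧
        φ a₁ = 0 ∧ φ a₂ = 0 ∧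
        deriv φ a₁ ≠ 0 ∧ deriv φ a₂ ≠ 0 ∧
        ((deriv φ a₁ < 0 ∧ 0 < deriv φ a₂) ∨ (0 < deriv φ a₁ ∧ deriv φ a₂ < 0)) ∧
        ∀ a : ℝ, 0 < a → 0 < γ * a + c → φ a = 0 → a = a₁ ∨ a = a₂) := by
  have hβ' : (((y' 0 : ℝ) - y 0) * ((yt 0 : ℝ) - y 0)) *
      (((y' 1 : ℝ) - y 1) * ((yt 1 : ℝ) - y 1)) < 0 := by exact_mod_cast hβ
  exact exists_rates_hasExactlyTwoNondegeneratePositiveZeros (y 0) (y 1) (yt 0) (yt 1) hlam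
    (hdep 0) (by linear_combination hβ') (fun h => hslope (by linarith))
end

section
/- Consider the one-variable steady-state function f(x) = x Π_{i=2}^{s} (c_i + γ_i x)^{α_i} defined on an interval D ⊆ (0,∞) where all factors c_i + γ_i x are positive, with γ_i, α_i nonzero reals. If the equation f(x) = K has a root of multiplicity at least two in D for some K > 0, then there exists a vector ρ ∈ ℝ_{>0}^s with Σ_{i=1}^s β_i ρ_i = 0, where β_1 := 1 and β_i := γ_i α_i for i ≥ 2; consequently the vector β has at least one positive and at least one negative coordinate. -/
/-!
At a multiple root of `f = K` the logarithmic derivative of `f` vanishes. For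
`f = ∏ᵢ (cᵢ + γᵢ x) ^ αᵢ` it equals `∑ᵢ βᵢ ρᵢ` with `βᵢ = γᵢ αᵢ` and `ρᵢ = (cᵢ + γᵢ x)⁻¹ > 0`,
so `β` is orthogonal to a positive vector. Being nonzero, `β` must then have coordinates of
both signs.
-/

open Finset

theorem logDeriv_rpow_affine {a b p x : ℝ} (h : 0 < a + b * x) :
    logDeriv (fun t => (a + b * t) ^ p) x = (b * p) * (a + b * x)⁻¹ := by
  have hlin : HasDerivAt (fun t => a + b * t) b x := by
    simpa using ((hasDerivAt_id x).const_mul b).const_add a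
  rw [logDeriv_apply, (hlin.rpow_const (Or.inl h.ne')).deriv, Real.rpow_sub_one h.ne']
  field_simp [(Real.rpow_pos_of_pos h p).ne']

theorem eq_zero_of_nonneg_of_sum_mul_eq_zero {ι : Type*} [Fintype ι] {β ρ : ι → ℝ}
    (hρ : ∀ i, 0 < ρ i) (hsum : ∑ i, β i * ρ i = 0) (hβ : ∀ i, 0 ≤ β i) : β = 0 := by
  have hterms := (sum_eq_zero_iff_of_nonneg fun i _ => mul_nonneg (hβ i) (hρ i).le).1 hsum
  funext i
  exact (mul_eq_zero.1 (hterms i (mem_univ i))).resolve_right (hρ i).ne'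

theorem exists_pos_and_exists_neg_of_sum_mul_eq_zero {ι : Type*} [Fintype ι] {β ρ : ι → ℝ}
    (hρ : ∀ i, 0 < ρ i) (hsum : ∑ i, β i * ρ i = 0) (hβ : β ≠ 0) :
    (∃ i, 0 < β i) ∧ ∃ i, β i < 0 := by
  have hneg_sum : ∑ i, (-β) i * ρ i = 0 := by simp [neg_mul, sum_neg_distrib, hsum]
  constructor
  · by_contra! h
    exact hβ (neg_eq_zero.1 (eq_zero_of_nonneg_of_sum_mul_eq_zero hρ hneg_sum
      fun i => neg_nonneg.2 (h i)))
  · by_contra! h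
    exact hβ (eq_zero_of_nonneg_of_sum_mul_eq_zero hρ hsum h)

/-- For the one-variable steady-state function
`f(x) = x ∏_{i≠0} (cᵢ + γᵢ x)^{αᵢ}` (here written with `c₀ = 0`, `γ₀ = α₀ = 1`
so `f(x) = ∏ᵢ (cᵢ + γᵢ x)^{αᵢ}` via real powers) on the region `D` where `x > 0`
and all `cᵢ + γᵢ x > 0`: if `f(x) = K` has a root of multiplicity at least two
in `D` for some `K > 0` (encoded as `f x = K` and `f' x = 0`), then there is a
positive vector `ρ` with `∑ βᵢ ρᵢ = 0` where `βᵢ = γᵢ αᵢ`; consequently `β`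
has at least one positive and at least one negative coordinate. -/
theorem multiple_root_forces_mixed_signs (s : ℕ) (hs : 2 ≤ s)
    (α γ c : Fin s → ℝ)
    (hα : ∀ i, α i ≠ 0) (hγ : ∀ i, γ i ≠ 0)
    (hyp : ∃ K : ℝ, 0 < K ∧ ∃ x : ℝ, 0 < x ∧ (∀ i, 0 < c i + γ i * x) ∧
      (∏ i, (c i + γ i * x) ^ (α i)) = K ∧
      deriv (fun t : ℝ => ∏ i, (c i + γ i * t) ^ (α i)) x = 0) :
    (∃ ρ : Fin s → ℝ, (∀ i, 0 < ρ i) ∧ ∑ i, (γ i * α i) * ρ i = 0) ∧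
    (∃ i, 0 < γ i * α i) ∧ (∃ i, γ i * α i < 0) := by
  obtain ⟨-, -, x, -, hpos, -, hder⟩ := hyp
  have hρ : ∀ i, 0 < (c i + γ i * x)⁻¹ := fun i => inv_pos.2 (hpos i)
  have hsum : ∑ i, (γ i * α i) * (c i + γ i * x)⁻¹ = 0 := by
    rw [← sum_congr rfl fun i _ => logDeriv_rpow_affine (hpos i),
      ← logDeriv_prod (f := fun i t => (c i + γ i * t) ^ α i)
        (fun i _ => (Real.rpow_pos_of_pos (hpos i) _).ne')
        (fun i _ => ((differentiableAt_id.const_mul _).const_add _).rpow_const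
          (Or.inl (hpos i).ne')),
      logDeriv_apply, hder, zero_div]
  have hβ : (fun i => γ i * α i) ≠ 0 := fun h =>
    mul_ne_zero (hγ ⟨0, by omega⟩) (hα ⟨0, by omega⟩) (congrFun h ⟨0, by omega⟩)
  exact ⟨⟨_, hρ, hsum⟩, exists_pos_and_exists_neg_of_sum_mul_eq_zero hρ hsum hβ⟩
end
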